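/- arXiv:1105.1686 — 9 statements merged into one kernel-verified Lean document; each statement's English description precedes it below -/
import Mathlib

section
/- Let (p_i)_{i≥1} be a family of mutually orthogonal orthogonal projections on H. For every compact operator x on H, the family (p_i x p_i)_{i≥1} is summable in the operator norm of B(H); in particular the pinching P(x) = Σ_{i≥1} p_i x p_i is a well-defined bounded operator, and P(x) is itself compact. -/
/-!
By Bessel's inequality `∑ ‖p i ζ‖² ≤ ‖ζ‖²` (a finite sum of the `p i` is again a projection),
`p i → 0` pointwise; a uniformly bounded family converging pointwise converges uniformly on the
relatively compact set `x '' closedBall 0 1`, so `‖p i * x * p i‖ ≤ ‖p i ∘L x‖ → 0`. Pythagoras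
on the orthogonal ranges bounds a block-diagonal sum `∑ p i * a i * p i` by the largest block norm,
which turns this decay into the Cauchy criterion for the series. Each term is compact and compact
operators form a closed subspace, so the sum is compact.
-/

open Filter Topology
open scoped InnerProductSpace

structure PairwiseOrthogonalProjections {ι R : Type*} [NonUnitalNonAssocSemiring R] [StarRing R]
    (p : ι → R) : Prop where
  isStarProjection : ∀ i, IsStarProjection (p i)
  mul_eq_zero : Pairwise fun i j => p i * p j = 0

namespace PairwiseOrthogonalProjections

variable {ι : Type*}

theorem isStarProjection_sum {R : Type*} [NonUnitalNonAssocSemiring R] [StarRing R] {p : ι → R}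
    (hp : PairwiseOrthogonalProjections p) (s : Finset ι) : IsStarProjection (∑ i ∈ s, p i) := by
  classical
  induction s using Finset.induction_on with
  | empty => simp [IsStarProjection.zero]
  | insert i s hi ih =>
    rw [Finset.sum_insert hi]
    refine (hp.isStarProjection i).add ih ?_
    rw [Finset.mul_sum]
    exact Finset.sum_eq_zero fun j hj => hp.mul_eq_zero (ne_of_mem_of_not_mem hj hi).symm

end PairwiseOrthogonalProjections

theorem IsCompactOperator.tendsto_comp_zero {𝕜 E F G ι : Type*} [RCLike 𝕜]
    [NormedAddCommGroup E] [NormedSpace 𝕜 E] [NormedAddCommGroup F] [NormedSpace 𝕜 F]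
    [NormedAddCommGroup G] [NormedSpace 𝕜 G] {x : G →L[𝕜] E} (hx : IsCompactOperator x)
    {l : Filter ι} {T : ι → E →L[𝕜] F} {C : ℝ} (hT : ∀ i, ‖T i‖ ≤ C)
    (hT_tendsto : ∀ y, Tendsto (fun i => T i y) l (𝓝 0)) :
    Tendsto (fun i => T i ∘L x) l (𝓝 0) := by
  refine NormedAddGroup.tendsto_nhds_zero.2 fun ε hε => ?_
  obtain ⟨K, hK, hxK⟩ := hx.image_closedBall_subset_compact 1
  obtain ⟨δ, hδ, hCδ⟩ := exists_pos_mul_lt (half_pos hε) C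
  obtain ⟨t, -, ht, hKt⟩ := hK.finite_cover_balls hδ
  have hnet : ∀ᶠ i in l, ∀ y ∈ t, ‖T i y‖ < ε / 2 :=
    ht.eventually_all.2 fun y _ =>
      NormedAddGroup.tendsto_nhds_zero.1 (hT_tendsto y) _ (half_pos hε)
  filter_upwards [hnet] with i hi
  have hC : 0 ≤ C := (norm_nonneg _).trans (hT i)
  refine lt_of_le_of_lt (ContinuousLinearMap.opNorm_le_of_unit_norm (by positivity) fun ζ hζ => ?_)
    (by linarith : C * δ + ε / 2 < ε)
  obtain ⟨y, hy, hxy⟩ := Set.mem_iUnion₂.1 (hKt (hxK ⟨ζ, by simp [hζ], rfl⟩))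
  calc ‖(T i ∘L x) ζ‖ = ‖T i (x ζ - y) + T i y‖ := by simp
    _ ≤ C * ‖x ζ - y‖ + ε / 2 :=
      norm_add_le_of_le ((T i).le_of_opNorm_le (hT i) _) (hi y hy).le
    _ ≤ C * δ + ε / 2 := by
      gcongr
      exact (mem_ball_iff_norm.1 hxy).le

section

variable {𝕜 H : Type*} [RCLike 𝕜] [NormedAddCommGroup H] [InnerProductSpace 𝕜 H] [CompleteSpace H]

theorem IsStarProjection.opNorm_le_one {p : H →L[𝕜] H}
    (hp : IsStarProjection p) : ‖p‖ ≤ 1 := by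
  obtain ⟨K, _, rfl⟩ := isStarProjection_iff_eq_starProjection.mp hp
  exact K.starProjection_norm_le

theorem inner_apply_apply_eq_zero_of_mul_eq_zero {p q : H →L[𝕜] H} (hp : IsSelfAdjoint p)
    (hpq : p * q = 0) (a b : H) : ⟪p a, q b⟫_𝕜 = 0 := by
  rw [← ContinuousLinearMap.adjoint_inner_right, ← ContinuousLinearMap.star_eq_adjoint, hp.star_eq,
    ← mul_apply_eq_comp, hpq, zero_apply, inner_zero_right]

namespace PairwiseOrthogonalProjections

variable {ι : Type*} {p : ι → H →L[𝕜] H} (hp : PairwiseOrthogonalProjections p)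
include hp

theorem sq_norm_sum_apply (s : Finset ι) (y : ι → H) :
    ‖∑ i ∈ s, p i (y i)‖ ^ 2 = ∑ i ∈ s, ‖p i (y i)‖ ^ 2 := by
  have hV : OrthogonalFamily 𝕜 (fun i => (p i).range) fun i => (p i).range.subtypeₗᵢ := by
    rintro i j hij ⟨_, a, rfl⟩ ⟨_, b, rfl⟩
    exact inner_apply_apply_eq_zero_of_mul_eq_zero (hp.isStarProjection i).isSelfAdjoint
      (hp.mul_eq_zero hij) a b
  exact hV.norm_sum (fun i => ⟨p i (y i), (p i).mem_range_self _⟩) s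

theorem sum_sq_norm_apply_le (s : Finset ι) (ζ : H) : ∑ i ∈ s, ‖p i ζ‖ ^ 2 ≤ ‖ζ‖ ^ 2 := by
  rw [← hp.sq_norm_sum_apply, ← sum_apply]
  gcongr
  simpa using (∑ i ∈ s, p i).le_of_opNorm_le (hp.isStarProjection_sum s).opNorm_le_one ζ

theorem tendsto_norm_apply_cofinite_zero (ζ : H) :
    Tendsto (fun i => ‖p i ζ‖) cofinite (𝓝 0) := by
  have hsq : Tendsto (fun i => ‖p i ζ‖ ^ 2) cofinite (𝓝 0) :=
    (summable_of_sum_le (fun _ => sq_nonneg _) (hp.sum_sq_norm_apply_le · ζ)).tendsto_cofinite_zero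
  simpa using hsq.sqrt

theorem norm_sum_mul_mul_le (s : Finset ι) (a : ι → H →L[𝕜] H) {C : ℝ} (hC : 0 ≤ C)
    (ha : ∀ i ∈ s, ‖p i * a i * p i‖ ≤ C) : ‖∑ i ∈ s, p i * a i * p i‖ ≤ C := by
  refine ContinuousLinearMap.opNorm_le_bound _ hC fun ζ => ?_
  have hblock : ∀ i ∈ s, ‖(p i * a i * p i) ζ‖ ≤ C * ‖p i ζ‖ := fun i hi => calc
    ‖(p i * a i * p i) ζ‖ = ‖(p i * a i * p i) (p i ζ)‖ := by
      rw [← mul_apply_eq_comp, mul_assoc _ (p i), (hp.isStarProjection i).isIdempotentElem.eq]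
    _ ≤ C * ‖p i ζ‖ := (p i * a i * p i).le_of_opNorm_le (ha i hi) _
  have hsq : ‖(∑ i ∈ s, p i * a i * p i) ζ‖ ^ 2 ≤ (C * ‖ζ‖) ^ 2 := calc
    ‖(∑ i ∈ s, p i * a i * p i) ζ‖ ^ 2 = ∑ i ∈ s, ‖(p i * a i * p i) ζ‖ ^ 2 := by
      simpa [sum_apply, mul_apply_eq_comp] using hp.sq_norm_sum_apply s fun i => (a i * p i) ζ
    _ ≤ ∑ i ∈ s, (C * ‖p i ζ‖) ^ 2 := by
      gcongr with i hi
      exact hblock i hi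
    _ = C ^ 2 * ∑ i ∈ s, ‖p i ζ‖ ^ 2 := by simp only [mul_pow, Finset.mul_sum]
    _ ≤ C ^ 2 * ‖ζ‖ ^ 2 := by gcongr; exact hp.sum_sq_norm_apply_le s ζ
    _ = (C * ‖ζ‖) ^ 2 := (mul_pow _ _ _).symm
  exact (pow_le_pow_iff_left₀ (norm_nonneg _) (by positivity) two_ne_zero).1 hsq

theorem summable_mul_mul (a : ι → H →L[𝕜] H)
    (ha : Tendsto (fun i => ‖p i * a i * p i‖) cofinite (𝓝 0)) :
    Summable fun i => p i * a i * p i := by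
  refine summable_iff_vanishing_norm.2 fun ε hε => ?_
  have hfin := eventually_cofinite.1 (ha.eventually (ge_mem_nhds (half_pos hε)))
  refine ⟨hfin.toFinset, fun t ht => ?_⟩
  refine (hp.norm_sum_mul_mul_le t a (half_pos hε).le fun i hi => ?_).trans_lt (half_lt_self hε)
  by_contra h
  exact Finset.disjoint_left.1 ht hi (hfin.mem_toFinset.2 h)

theorem tendsto_norm_mul_mul_cofinite_zero {x : H →L[𝕜] H} (hx : IsCompactOperator x) :
    Tendsto (fun i => ‖p i * x * p i‖) cofinite (𝓝 0) := by
  have hnorm i : ‖p i‖ ≤ 1 := (hp.isStarProjection i).opNorm_le_one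
  have hpx : Tendsto (fun i => p i ∘L x) cofinite (𝓝 0) :=
    hx.tendsto_comp_zero hnorm fun y => tendsto_zero_iff_norm_tendsto_zero.2
      (hp.tendsto_norm_apply_cofinite_zero y)
  refine squeeze_zero (fun _ => norm_nonneg _) (fun i => ?_)
    (tendsto_zero_iff_norm_tendsto_zero.1 hpx)
  calc ‖p i * x * p i‖ ≤ ‖p i ∘L x‖ * ‖p i‖ := ContinuousLinearMap.opNorm_comp_le _ _
    _ ≤ ‖p i ∘L x‖ := mul_le_of_le_one_right (norm_nonneg _) (hnorm i)

end PairwiseOrthogonalProjections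

end

theorem pinching_summable_and_compact_general
    {H : Type*} [NormedAddCommGroup H] [InnerProductSpace ℂ H] [CompleteSpace H]
    (p : ℕ → H →L[ℂ] H)
    (hsa : ∀ i, IsSelfAdjoint (p i))
    (hidem : ∀ i, p i * p i = p i)
    (horth : ∀ i j, i ≠ j → p i * p j = 0)
    (x : H →L[ℂ] H) (hx : IsCompactOperator ⇑x) :
    Summable (fun i => p i * x * p i) ∧
      IsCompactOperator ⇑(∑' i, p i * x * p i) := by
  have hp : PairwiseOrthogonalProjections p := ⟨fun i => ⟨hidem i, hsa i⟩, horth⟩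
  refine ⟨hp.summable_mul_mul _ (hp.tendsto_norm_mul_mul_cofinite_zero hx), ?_⟩
  exact tsum_mem (s := compactOperator (RingHom.id ℂ) H H) isClosed_setOfPred_isCompactOperator
    fun i => (hx.clm_comp (p i)).comp_clm (p i)

/-- Let `(p i)` be a family of mutually orthogonal orthogonal projections on an
infinite-dimensional separable complex Hilbert space `H`. For every compact operator `x` on `H`,
the family `(p i * x * p i)` is summable in the operator norm; in particular the pinching
`P x = ∑' i, p i * x * p i` is a well-defined bounded operator, and it is compact. -/
theorem pinching_summable_and_compact
    {H : Type*} [NormedAddCommGroup H] [InnerProductSpace ℂ H] [CompleteSpace H]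
    [TopologicalSpace.SeparableSpace H]
    (hinf : ¬ FiniteDimensional ℂ H)
    (p : ℕ → H →L[ℂ] H)
    (hsa : ∀ i, IsSelfAdjoint (p i))
    (hidem : ∀ i, p i * p i = p i)
    (horth : ∀ i j, i ≠ j → p i * p j = 0)
    (x : H →L[ℂ] H) (hx : IsCompactOperator ⇑x) :
    Summable (fun i => p i * x * p i) ∧
      IsCompactOperator ⇑(∑' i, p i * x * p i) :=
  pinching_summable_and_compact_general p hsa hidem horth x hx
end

section
/- Let x be a compact operator on H, let i ≥ 1 be an index with p_i ≠ 0, and let q be an orthogonal projection with q p_i = 0. Then there exists an operator y of rank at most one with ‖y‖ ≤ 1 such that ‖x·P(y) − P(x·y)‖ ≥ ‖p_i x q‖. (In particular, applying this with q = p_j for j ≠ i or q = p_0, the norm of the commutator of left multiplication by x with the pinching P, as an operator on the compact operators, is at least ‖p_i x p_j‖ for every j ≥ 0 with j ≠ i.) -/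
/-!
Since `p i * x * q` is compact, it attains its norm at some `v` in the unit ball. Take a unit
vector `u` in the range of `p i` and the rank-one operator `y = ⟪u, ·⟫ q v`. Then `y * p j = 0`
for `j ≠ i` (as `p j u = 0`) and `p i * y = 0` (as `p i * q = 0`), so the pinching kills `y` and
keeps only the `i`-th block `p i * x * y * p i` of `x * y`, which maps `u` to `p i (x (q v))`.
-/

open InnerProductSpace ContinuousLinearMap

/-- The pinching operator associated with a family of mutually orthogonal projections. -/
noncomputable def pinch {H : Type*} [NormedAddCommGroup H] [InnerProductSpace ℂ H]
    (p : ℕ → H →L[ℂ] H) (x : H →L[ℂ] H) : H →L[ℂ] H :=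
  ∑' i, p i * x * p i

lemma InnerProductSpace.rank_rankOne_le {𝕜 E F : Type*} [RCLike 𝕜] [SeminormedAddCommGroup E]
    [NormedSpace 𝕜 E] [NormedAddCommGroup F] [InnerProductSpace 𝕜 F] (x : E) (y : F) :
    (rankOne 𝕜 x y).rank ≤ 1 := by
  rcases eq_or_ne y 0 with rfl | hy
  · simp
  rcases eq_or_ne x 0 with rfl | hx
  · simp
  exact (rank_rankOne hx hy).le

lemma InnerProductSpace.rankOne_comp_of_isSelfAdjoint {𝕜 E F : Type*} [RCLike 𝕜]
    [SeminormedAddCommGroup E] [NormedSpace 𝕜 E] [NormedAddCommGroup F] [InnerProductSpace 𝕜 F]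
    [CompleteSpace F] (x : E) (y : F) {P : F →L[𝕜] F} (hP : IsSelfAdjoint P) :
    rankOne 𝕜 x y ∘L P = rankOne 𝕜 x (P y) := by
  rw [rankOne_comp, hP.adjoint_eq]

lemma IsIdempotentElem.exists_norm_eq_one_apply_eq {𝕜 E : Type*} [RCLike 𝕜]
    [NormedAddCommGroup E] [NormedSpace 𝕜 E] {P : E →L[𝕜] E} (hP : IsIdempotentElem P)
    (hP0 : P ≠ 0) : ∃ u : E, ‖u‖ = 1 ∧ P u = u := by
  obtain ⟨z, hz⟩ : ∃ z, P z ≠ 0 := by simpa [ContinuousLinearMap.ext_iff] using hP0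
  refine ⟨(‖P z‖⁻¹ : 𝕜) • P z, by simp [norm_smul, hz], ?_⟩
  rw [map_smul, ← mul_apply_eq_comp, hP.eq]

/-- `‖T† T‖ = ‖T‖²` is attained in the spectrum of the compact self-adjoint operator `T† T`, and
its nonzero spectral values are eigenvalues. -/
theorem IsCompactOperator.exists_norm_apply_eq_opNorm
    {E F : Type*} [NormedAddCommGroup E] [InnerProductSpace ℂ E] [CompleteSpace E]
    [NormedAddCommGroup F] [InnerProductSpace ℂ F] [CompleteSpace F]
    {T : E →L[ℂ] F} (hT : IsCompactOperator T) :
    ∃ v : E, ‖v‖ ≤ 1 ∧ ‖T v‖ = ‖T‖ := by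
  rcases eq_or_ne T 0 with rfl | hT0
  · exact ⟨0, by simp⟩
  have : Nontrivial E := by
    obtain ⟨x, hx⟩ := DFunLike.ne_iff.1 hT0
    exact nontrivial_of_ne x 0 (by rintro rfl; simp at hx)
  set S := adjoint T ∘L T
  obtain ⟨z, hzS, hz⟩ := spectrum.exists_nnnorm_eq_spectralRadius S
  rw [S.spectralRadius_eq_nnnorm (isPositive_adjoint_comp_self T).isSelfAdjoint,
    ENNReal.coe_inj] at hz
  have hz_norm : ‖z‖ = ‖T‖ ^ 2 := by
    rw [sq, ← norm_adjoint_comp_self]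
    exact congrArg NNReal.toReal hz
  have hz0 : z ≠ 0 :=
    norm_ne_zero_iff.1 (by rw [hz_norm]; exact pow_ne_zero 2 (norm_ne_zero_iff.2 hT0))
  obtain ⟨v, hv, hv0⟩ := ((hT.clm_comp (adjoint T)).hasEigenvalue_iff_mem_spectrum hz0).2 hzS
    |>.exists_hasEigenvector
  rw [Module.End.mem_genEigenspace_one] at hv
  have hTv : ‖T v‖ ^ 2 = (‖T‖ * ‖v‖) ^ 2 := by
    calc ‖T v‖ ^ 2 = ‖(inner ℂ (T v) (T v) : ℂ)‖ := by simp [inner_self_eq_norm_sq_to_K]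
      _ = ‖(inner ℂ v (S v) : ℂ)‖ := by rw [← adjoint_inner_right]; rfl
      _ = (‖T‖ * ‖v‖) ^ 2 := by
        rw [show S v = z • v from hv, inner_smul_right, inner_self_eq_norm_sq_to_K]
        simp [hz_norm, mul_pow]
  have hv_pos : 0 < ‖v‖ := norm_pos_iff.2 hv0
  refine ⟨(‖v‖⁻¹ : ℂ) • v, by simp [norm_smul, hv_pos.ne'], ?_⟩
  rw [map_smul, norm_smul, (pow_left_inj₀ (norm_nonneg _) (by positivity) two_ne_zero).1 hTv]
  simp only [norm_inv, Complex.norm_real, norm_norm]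
  field_simp

lemma pinch_eq_of_mul_eq_zero {H : Type*} [NormedAddCommGroup H] [InnerProductSpace ℂ H]
    {p : ℕ → H →L[ℂ] H} {y : H →L[ℂ] H} {i : ℕ} (h : ∀ j ≠ i, y * p j = 0) :
    pinch p y = p i * y * p i :=
  tsum_eq_single i fun j hj => by rw [mul_assoc, h j hj, mul_zero]

theorem pinching_commutator_lower_bound_general
    {H : Type*} [NormedAddCommGroup H] [InnerProductSpace ℂ H] [CompleteSpace H]
    (p : ℕ → H →L[ℂ] H)
    (hsa : ∀ i, IsSelfAdjoint (p i))
    (hidem : ∀ i, p i * p i = p i)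
    (horth : ∀ i j, i ≠ j → p i * p j = 0)
    (x : H →L[ℂ] H) (hx : IsCompactOperator ⇑x)
    (i : ℕ) (hpi : p i ≠ 0)
    (q : H →L[ℂ] H) (hqsa : IsSelfAdjoint q) (hqidem : q * q = q) (hqp : q * p i = 0) :
    ∃ y : H →L[ℂ] H, Module.rank ℂ ↥(LinearMap.range (y : H →ₗ[ℂ] H)) ≤ 1 ∧ ‖y‖ ≤ 1 ∧
      ‖p i * x * q‖ ≤ ‖x * pinch p y - pinch p (x * y)‖ := by
  obtain ⟨v, hv, hv_norm⟩ := IsCompactOperator.exists_norm_apply_eq_opNorm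
    (T := p i * x * q) ((hx.comp_clm q).clm_comp (p i))
  obtain ⟨u, hu, hpu⟩ := IsIdempotentElem.exists_norm_eq_one_apply_eq (hidem i) hpi
  have hpq : p i * q = 0 := by
    simpa [(hsa i).star_eq, hqsa.star_eq] using congrArg star hqp
  set y := rankOne ℂ (q v) u
  have hy_right : ∀ j ≠ i, y * p j = 0 := fun j hj => by
    rw [mul_def, rankOne_comp_of_isSelfAdjoint _ _ (hsa j), ← hpu, ← mul_apply_eq_comp,
      horth j i hj, zero_apply, map_zero]
  have hy_left : p i * y = 0 := by
    rw [mul_def, comp_rankOne, ← mul_apply_eq_comp, hpq]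
    simp
  have hcomm : x * pinch p y - pinch p (x * y) = -(p i * (x * y) * p i) := by
    rw [pinch_eq_of_mul_eq_zero hy_right,
      pinch_eq_of_mul_eq_zero fun j hj => by rw [mul_assoc, hy_right j hj, mul_zero],
      hy_left, zero_mul, mul_zero, zero_sub]
  refine ⟨y, rank_rankOne_le _ _, ?_, ?_⟩
  · rw [norm_rankOne, hu, mul_one]
    exact (le_opNorm q v).trans
      (mul_le_one₀ (IsStarProjection.norm_le q ⟨hqidem, hqsa⟩) (norm_nonneg _) hv)
  · calc ‖p i * x * q‖ = ‖(p i * (x * y) * p i) u‖ := by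
          simp [← hv_norm, y, hpu, inner_self_eq_norm_sq_to_K, hu]
      _ ≤ ‖p i * (x * y) * p i‖ := by simpa [hu] using le_opNorm (p i * (x * y) * p i) u
      _ = ‖x * pinch p y - pinch p (x * y)‖ := by rw [hcomm, norm_neg]

/-- For a compact `x`, an index `i` with `p i ≠ 0` and an orthogonal projection
`q` with `q * p i = 0`, there is an operator `y` of rank at most one with `‖y‖ ≤ 1` such that
`‖x * P y - P (x * y)‖ ≥ ‖p i * x * q‖`. -/
theorem pinching_commutator_lower_bound
    {H : Type*} [NormedAddCommGroup H] [InnerProductSpace ℂ H] [CompleteSpace H]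
    [TopologicalSpace.SeparableSpace H]
    (hinf : ¬ FiniteDimensional ℂ H)
    (p : ℕ → H →L[ℂ] H)
    (hsa : ∀ i, IsSelfAdjoint (p i))
    (hidem : ∀ i, p i * p i = p i)
    (horth : ∀ i j, i ≠ j → p i * p j = 0)
    (x : H →L[ℂ] H) (hx : IsCompactOperator ⇑x)
    (i : ℕ) (hpi : p i ≠ 0)
    (q : H →L[ℂ] H) (hqsa : IsSelfAdjoint q) (hqidem : q * q = q) (hqp : q * p i = 0) :
    ∃ y : H →L[ℂ] H, Module.rank ℂ ↥(LinearMap.range (y : H →ₗ[ℂ] H)) ≤ 1 ∧ ‖y‖ ≤ 1 ∧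
      ‖p i * x * q‖ ≤ ‖x * pinch p y - pinch p (x * y)‖ :=
  pinching_commutator_lower_bound_general p hsa hidem horth x hx i hpi q hqsa hqidem hqp
end

section
/- Let z be a compact operator on H with z* = −z, p_i z p_i = 0 for every i ≥ 1, and p_0 z p_0 = 0. Then for every ε > 0 there exists a compact operator y with ‖y‖ ≤ 1 such that ‖z·P(y) − P(z·y)‖ ≥ (1/2)‖z‖ − ε. -/
open Filter Topology
open scoped InnerProductSpace

theorem norm_le_two_mul_norm_mul_one_sub {A : Type*} [NormedRing A] [StarRing A] [CStarRing A]
    {z e : A} (hz : star z = -z) (he : IsStarProjection e) (hzee : e * z * e = 0) :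
    ‖z‖ ≤ 2 * ‖z * (1 - e)‖ := by
  have hze : ‖z * e‖ ≤ ‖z * (1 - e)‖ := calc
    ‖z * e‖ = ‖e * z‖ := by
      rw [← norm_star, star_mul, he.isSelfAdjoint.star_eq, hz, mul_neg, norm_neg]
    _ = ‖e * (z * (1 - e))‖ := by rw [mul_sub z, mul_one, mul_sub, ← mul_assoc, hzee, sub_zero]
    _ ≤ ‖e‖ * ‖z * (1 - e)‖ := norm_mul_le _ _
    _ ≤ ‖z * (1 - e)‖ := mul_le_of_le_one_left (norm_nonneg _) (he.norm_le e)
  calc ‖z‖ = ‖z * (1 - e) + z * e‖ := by noncomm_ring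
    _ ≤ ‖z * (1 - e)‖ + ‖z * e‖ := norm_add_le _ _
    _ ≤ 2 * ‖z * (1 - e)‖ := by linarith

theorem IsStarProjection.sum {R ι : Type*} [NonUnitalNonAssocSemiring R] [StarRing R]
    {p : ι → R} {s : Finset ι} (hp : ∀ i ∈ s, IsStarProjection (p i))
    (horth : ∀ i ∈ s, ∀ j ∈ s, i ≠ j → p i * p j = 0) : IsStarProjection (∑ i ∈ s, p i) := by
  classical
  induction s using Finset.induction_on with
  | empty => simp [IsStarProjection.zero]
  | insert a s ha ih =>
    rw [Finset.sum_insert ha]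
    refine (hp a (by simp)).add (ih (fun i hi => hp i (by simp [hi]))
      (fun i hi j hj => horth i (by simp [hi]) j (by simp [hj]))) ?_
    rw [Finset.mul_sum]
    exact Finset.sum_eq_zero fun i hi =>
      horth a (by simp) i (by simp [hi]) (by rintro rfl; exact ha hi)

section LineProjection

variable {𝕜 E : Type*} [RCLike 𝕜] [NormedAddCommGroup E] [InnerProductSpace 𝕜 E]

theorem Submodule.isCompactOperator_starProjection (K : Submodule 𝕜 E) [FiniteDimensional 𝕜 K] :
    IsCompactOperator K.starProjection :=
  (isCompactOperator_of_locallyCompactSpace_dom K.orthogonalProjectionOnto).clm_comp K.subtypeL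

variable [CompleteSpace E]

theorem starProjection_singleton_apply_of_isSelfAdjoint {T : E →L[𝕜] E} (hT : IsSelfAdjoint T)
    (v w : E) : (𝕜 ∙ v).starProjection (T w) = (⟪T v, w⟫_𝕜 / ((‖v‖ ^ 2 : ℝ) : 𝕜)) • v := by
  rw [Submodule.starProjection_singleton, ← ContinuousLinearMap.adjoint_inner_right,
    hT.adjoint_eq]

theorem commute_starProjection_singleton {T : E →L[𝕜] E} (hT : IsSelfAdjoint T) {v : E} {c : ℝ}
    (hv : T v = (c : 𝕜) • v) : Commute T (𝕜 ∙ v).starProjection := by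
  ext w
  rw [mul_apply_eq_comp, mul_apply_eq_comp, starProjection_singleton_apply_of_isSelfAdjoint hT,
    Submodule.starProjection_singleton, map_smul, hv, inner_smul_left, RCLike.conj_ofReal,
    smul_smul]
  ring_nf

theorem starProjection_singleton_mul_of_apply_eq_self {T : E →L[𝕜] E} (hT : IsSelfAdjoint T)
    {v : E} (hv : T v = v) : (𝕜 ∙ v).starProjection * T = (𝕜 ∙ v).starProjection := by
  ext w
  rw [mul_apply_eq_comp, starProjection_singleton_apply_of_isSelfAdjoint hT, hv,
    Submodule.starProjection_singleton]

theorem IsStarProjection.starProjection_singleton_apply {p : E →L[𝕜] E} (hp : IsStarProjection p)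
    (x : E) : (𝕜 ∙ p x).starProjection x = p x := by
  have hpx : p (p x) = p x := by rw [← mul_apply_eq_comp, hp.isIdempotentElem.eq]
  rw [← starProjection_singleton_mul_of_apply_eq_self hp.isSelfAdjoint hpx, mul_apply_eq_comp,
    Submodule.starProjection_eq_self_iff]
  exact Submodule.mem_span_singleton_self _

end LineProjection

section OrthogonalProjections

variable {𝕜 E ι : Type*} [RCLike 𝕜] [NormedAddCommGroup E] [InnerProductSpace 𝕜 E]
  {p : ι → E →L[𝕜] E}

theorem apply_apply_eq_ite_of_mul_eq_zero [DecidableEq ι] (hp : ∀ i, IsIdempotentElem (p i))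
    (horth : Pairwise fun i j => p i * p j = 0) (i j : ι) (x : E) :
    p i (p j x) = if j = i then p i x else 0 := by
  split_ifs with hij
  · rw [hij, ← mul_apply_eq_comp, (hp i).eq]
  · rw [← mul_apply_eq_comp, horth (Ne.symm hij), zero_apply]

variable (p) in
noncomputable def blockSpanProjection (s : Finset ι) (ξ : E) : E →L[𝕜] E :=
  ∑ i ∈ s, (𝕜 ∙ p i ξ).starProjection

theorem isCompactOperator_blockSpanProjection (s : Finset ι) (ξ : E) :
    IsCompactOperator (blockSpanProjection p s ξ) :=
  Submodule.sum_mem (compactOperator (RingHom.id 𝕜) E E) fun i _ =>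
    (𝕜 ∙ p i ξ).isCompactOperator_starProjection

variable [CompleteSpace E]

theorem inner_apply_apply_eq_zero_of_mul_eq_zero_s5 (hp : ∀ i, IsSelfAdjoint (p i))
    (horth : Pairwise fun i j => p i * p j = 0) {i j : ι} (hij : i ≠ j) (a b : E) :
    ⟪p i a, p j b⟫_𝕜 = 0 := by
  rw [← ContinuousLinearMap.adjoint_inner_right, (hp i).adjoint_eq, ← mul_apply_eq_comp,
    horth hij, zero_apply, inner_zero_right]

theorem orthogonalFamily_range_of_mul_eq_zero (hp : ∀ i, IsSelfAdjoint (p i))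
    (horth : Pairwise fun i j => p i * p j = 0) :
    OrthogonalFamily 𝕜 (fun i => (p i).range) fun i => (p i).range.subtypeₗᵢ := by
  refine orthogonalFamily_iff_pairwise.mpr fun i j hij => Submodule.isOrtho_iff_inner_eq.mpr ?_
  rintro _ ⟨a, rfl⟩ _ ⟨b, rfl⟩
  exact inner_apply_apply_eq_zero_of_mul_eq_zero_s5 hp horth hij a b

theorem summable_apply_of_mul_eq_zero (hp : ∀ i, IsStarProjection (p i))
    (horth : Pairwise fun i j => p i * p j = 0) (x : E) : Summable fun i => p i x := by
  have hV := orthogonalFamily_range_of_mul_eq_zero (fun i => (hp i).isSelfAdjoint) horth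
  let f : ∀ i, (p i).range := fun i => ⟨p i x, LinearMap.mem_range_self _ _⟩
  refine (hV.summable_iff_norm_sq_summable f).mpr
    (summable_of_sum_le (c := ‖x‖ ^ 2) (fun i => sq_nonneg _) fun s => ?_)
  have hQ : IsStarProjection (∑ i ∈ s, p i) :=
    .sum (fun i _ => hp i) fun i _ j _ hij => horth hij
  calc ∑ i ∈ s, ‖f i‖ ^ 2 = ‖(∑ i ∈ s, p i) x‖ ^ 2 := by
        rw [← hV.norm_sum f s, sum_apply]; rfl
    _ ≤ ‖x‖ ^ 2 := by
        gcongr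
        simpa using (∑ i ∈ s, p i).le_of_opNorm_le (hQ.norm_le _) x

theorem hasSum_apply_sub_of_mul_eq_zero (hp : ∀ i, IsStarProjection (p i))
    (horth : Pairwise fun i j => p i * p j = 0) {p₀ : E →L[𝕜] E} (hp₀ : IsStarProjection p₀)
    (hp₀_fix : ∀ x, p₀ x = x ↔ ∀ i, p i x = 0) (x : E) :
    HasSum (fun i => p i x) (x - p₀ x) := by
  classical
  have hp₀p : ∀ i y, p₀ (p i y) = 0 := fun i y => by
    have hpp₀ : p i * p₀ = 0 := ContinuousLinearMap.ext fun y =>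
      (hp₀_fix (p₀ y)).mp (by rw [← mul_apply_eq_comp, hp₀.isIdempotentElem.eq]) i
    rw [← mul_apply_eq_comp, ← hp₀.isSelfAdjoint.star_eq, ← (hp i).isSelfAdjoint.star_eq,
      ← star_mul, hpp₀, star_zero, zero_apply]
  obtain ⟨w, hw⟩ := summable_apply_of_mul_eq_zero hp horth x
  have hpw : ∀ j, p j w = p j x := fun j => by
    refine (hw.mapL (p j)).unique ?_
    simp only [apply_apply_eq_ite_of_mul_eq_zero (fun i => (hp i).isIdempotentElem) horth j]
    exact hasSum_ite_eq j (p j x)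
  have hp₀w : p₀ w = 0 := (hw.mapL p₀).unique (by simp only [hp₀p]; exact hasSum_zero)
  have hfix : p₀ (x - w) = x - w := (hp₀_fix _).mpr fun i => by rw [map_sub, hpw, sub_self]
  rw [map_sub, hp₀w, sub_zero] at hfix
  rwa [hfix, sub_sub_cancel]

theorem isStarProjection_blockSpanProjection (hp : ∀ i, IsStarProjection (p i))
    (horth : Pairwise fun i j => p i * p j = 0) (s : Finset ι) (ξ : E) :
    IsStarProjection (blockSpanProjection p s ξ) := by
  refine .sum (fun i _ => isStarProjection_starProjection) fun i _ j _ hij => ?_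
  refine Submodule.IsOrtho.starProjection_comp_starProjection ?_
  rw [Submodule.isOrtho_span]
  rintro _ rfl _ rfl
  exact inner_apply_apply_eq_zero_of_mul_eq_zero_s5 (fun i => (hp i).isSelfAdjoint) horth hij ξ ξ

theorem commute_blockSpanProjection (hp : ∀ i, IsStarProjection (p i))
    (horth : Pairwise fun i j => p i * p j = 0) (s : Finset ι) (ξ : E) (j : ι) :
    Commute (p j) (blockSpanProjection p s ξ) := by
  classical
  refine Commute.sum_right _ _ _ fun i _ => commute_starProjection_singleton (hp j).isSelfAdjoint
    (c := if i = j then 1 else 0) ?_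
  rw [apply_apply_eq_ite_of_mul_eq_zero (fun i => (hp i).isIdempotentElem) horth]
  split_ifs with hij <;> simp [hij]

theorem blockSpanProjection_mul_sum (hp : ∀ i, IsStarProjection (p i))
    (horth : Pairwise fun i j => p i * p j = 0) (s : Finset ι) (ξ : E) :
    blockSpanProjection p s ξ * ∑ i ∈ s, p i = blockSpanProjection p s ξ := by
  classical
  refine (Finset.sum_mul ..).trans (Finset.sum_congr rfl fun i hi =>
    starProjection_singleton_mul_of_apply_eq_self
      (isSelfAdjoint_sum s fun j _ => (hp j).isSelfAdjoint) ?_)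
  simp [sum_apply, apply_apply_eq_ite_of_mul_eq_zero (fun i => (hp i).isIdempotentElem) horth, hi]

theorem blockSpanProjection_apply_self (hp : ∀ i, IsStarProjection (p i)) (s : Finset ι)
    (ξ : E) : blockSpanProjection p s ξ ξ = ∑ i ∈ s, p i ξ := by
  simp only [blockSpanProjection, sum_apply, (hp _).starProjection_singleton_apply]

end OrthogonalProjections

section Pinching

variable {H : Type*} [NormedAddCommGroup H] [InnerProductSpace ℂ H] {p : ℕ → H →L[ℂ] H}
  {y : H →L[ℂ] H}

theorem pinch_mul_eq_zero {z : H →L[ℂ] H} (hp : ∀ i, IsIdempotentElem (p i))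
    (hz : ∀ i, p i * z * p i = 0) (hy : ∀ i, Commute (p i) y) : pinch p (z * y) = 0 := by
  have h : ∀ i, p i * (z * y) * p i = 0 := fun i => calc
    p i * (z * y) * p i = p i * z * (y * (p i * p i)) := by rw [(hp i).eq]; noncomm_ring
    _ = p i * z * p i * y * p i := by rw [← mul_assoc y, ← (hy i).eq]; noncomm_ring
    _ = 0 := by rw [hz i, zero_mul, zero_mul]
  simp [pinch, h]

theorem pinch_eq_self (hp : ∀ i, IsIdempotentElem (p i))
    (horth : Pairwise fun i j => p i * p j = 0) (hy : ∀ i, Commute (p i) y) {s : Finset ℕ}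
    (hys : y * ∑ i ∈ s, p i = y) : pinch p y = y := by
  have hterm : ∀ i, p i * y * p i = y * p i := fun i => by
    rw [(hy i).eq, mul_assoc, (hp i).eq]
  have hout : ∀ i ∉ s, y * p i = 0 := fun i hi => by
    rw [← hys, mul_assoc, Finset.sum_mul,
      Finset.sum_eq_zero fun j hj => horth (ne_of_mem_of_not_mem hj hi), mul_zero]
  rw [pinch, tsum_congr hterm, tsum_eq_sum hout, ← Finset.mul_sum, hys]

end Pinching

theorem pinching_commutator_lower_bound_skew_general
    {H : Type*} [NormedAddCommGroup H] [InnerProductSpace ℂ H] [CompleteSpace H]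
    (p : ℕ → H →L[ℂ] H)
    (hsa : ∀ i, IsSelfAdjoint (p i))
    (hidem : ∀ i, p i * p i = p i)
    (horth : ∀ i j, i ≠ j → p i * p j = 0)
    (p0 : H →L[ℂ] H) (hp0sa : IsSelfAdjoint p0) (hp0idem : p0 * p0 = p0)
    (hp0fix : ∀ ξ : H, p0 ξ = ξ ↔ ∀ i, p i ξ = 0)
    (z : H →L[ℂ] H) (hzsk : star z = -z)
    (hdiag : ∀ i, p i * z * p i = 0) (hdiag0 : p0 * z * p0 = 0) :
    ∀ ε > (0 : ℝ), ∃ y : H →L[ℂ] H, IsCompactOperator ⇑y ∧ ‖y‖ ≤ 1 ∧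
      ‖z‖ / 2 - ε ≤ ‖z * pinch p y - pinch p (z * y)‖ := by
  intro ε hε
  have hp : ∀ i, IsStarProjection (p i) := fun i => ⟨hidem i, hsa i⟩
  have horth' : Pairwise fun i j => p i * p j = 0 := fun i j => horth i j
  obtain ⟨x, hx, hzx⟩ := (z * (1 - p0)).exists_lt_apply_of_lt_opNorm (r := ‖z‖ / 2 - ε) (by
    linarith [norm_le_two_mul_norm_mul_one_sub hzsk ⟨hp0idem, hp0sa⟩ hdiag0])
  have hlim : Tendsto (fun N => z (∑ i ∈ Finset.range N, p i x)) atTop (𝓝 ((z * (1 - p0)) x)) :=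
    (z.continuous.tendsto _).comp
      (hasSum_apply_sub_of_mul_eq_zero hp horth' ⟨hp0idem, hp0sa⟩ hp0fix x).tendsto_sum_nat
  obtain ⟨N, hN⟩ := (hlim.norm.eventually (lt_mem_nhds hzx)).exists
  set y := blockSpanProjection p (Finset.range N) x
  have hcomm : ∀ i, Commute (p i) y := commute_blockSpanProjection hp horth' _ x
  refine ⟨y, isCompactOperator_blockSpanProjection _ x,
    (isStarProjection_blockSpanProjection hp horth' _ x).norm_le _, ?_⟩
  rw [pinch_eq_self hidem horth' hcomm (blockSpanProjection_mul_sum hp horth' _ x),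
    pinch_mul_eq_zero hidem hdiag hcomm, sub_zero]
  calc ‖z‖ / 2 - ε ≤ ‖z (y x)‖ := by rw [blockSpanProjection_apply_self hp]; exact hN.le
    _ ≤ ‖z * y‖ := (z * y).unit_le_opNorm x hx.le

/-- Let `z` be a compact skew-adjoint operator with `p i * z * p i = 0` for all
`i` and `p0 * z * p0 = 0`. Then for every `ε > 0` there is a compact `y` with `‖y‖ ≤ 1` and
`‖z * P y - P (z * y)‖ ≥ ‖z‖ / 2 - ε`. -/
theorem pinching_commutator_lower_bound_skew
    {H : Type*} [NormedAddCommGroup H] [InnerProductSpace ℂ H] [CompleteSpace H]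
    [TopologicalSpace.SeparableSpace H]
    (hinf : ¬ FiniteDimensional ℂ H)
    (p : ℕ → H →L[ℂ] H)
    (hsa : ∀ i, IsSelfAdjoint (p i))
    (hidem : ∀ i, p i * p i = p i)
    (horth : ∀ i j, i ≠ j → p i * p j = 0)
    (p0 : H →L[ℂ] H) (hp0sa : IsSelfAdjoint p0) (hp0idem : p0 * p0 = p0)
    (hp0fix : ∀ ξ : H, p0 ξ = ξ ↔ ∀ i, p i ξ = 0)
    (z : H →L[ℂ] H) (hz : IsCompactOperator ⇑z) (hzsk : star z = -z)
    (hdiag : ∀ i, p i * z * p i = 0) (hdiag0 : p0 * z * p0 = 0) :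
    ∀ ε > (0 : ℝ), ∃ y : H →L[ℂ] H, IsCompactOperator ⇑y ∧ ‖y‖ ≤ 1 ∧
      ‖z‖ / 2 - ε ≤ ‖z * pinch p y - pinch p (z * y)‖ :=
  pinching_commutator_lower_bound_skew_general p hsa hidem horth p0 hp0sa hp0idem hp0fix z hzsk
    hdiag hdiag0
end

section
/- Suppose the family of projections is finite, say p_1, …, p_w. Let u be a unitary operator on H with u − 1 compact, and let C ≥ 0 be such that ‖u·P(u*·y) − P(y)‖ ≤ C for every compact y with ‖y‖ ≤ 1. Then for every index i ∈ {0, 1, …, w} one has ‖u p_i u* − p_i‖ ≤ 2wC. -/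
/-!
Write `q = u pⱼ u*` and `D = u pⱼ - pⱼ u`, so that `q - pⱼ = D u*`. Multiplying the pinching
defect `u P(y) - P(u y)` on the right by `pⱼ` leaves `D y pⱼ`, so `‖D y pⱼ‖ ≤ C` for every compact
contraction `y`; testing against rank-one projections removes `y` and gives `‖D pⱼ‖ ≤ C` and
`‖D u* pⱼ‖ ≤ C`. Splitting `q - pⱼ = (q - pⱼ) pⱼ + (q - pⱼ)(1 - pⱼ)` and using that `q - pⱼ` is
self-adjoint bounds the two pieces by these two norms, so `‖q - pⱼ‖ ≤ 2C`. The complementary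
projection `1 - ∑ pᵢ` is conjugated into `1 - ∑ u pᵢ u*`, which gives the bound `2wC` for it.
-/

open ContinuousLinearMap

theorem Submodule.isCompactOperator_starProjection_s8 {𝕜 H : Type*} [RCLike 𝕜]
    [NormedAddCommGroup H] [InnerProductSpace 𝕜 H] (K : Submodule 𝕜 H) [FiniteDimensional 𝕜 K] :
    IsCompactOperator K.starProjection := by
  have hid : IsCompactOperator (id : K → K) := isCompactOperator_id_iff_finiteDimensional.2 ‹_›
  exact (hid.comp_clm K.orthogonalProjectionOnto).continuous_comp K.subtypeL.continuous

theorem ContinuousLinearMap.norm_comp_le_of_forall_isCompactOperator {𝕜 E F H : Type*} [RCLike 𝕜]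
    [SeminormedAddCommGroup E] [NormedSpace 𝕜 E] [SeminormedAddCommGroup F] [NormedSpace 𝕜 F]
    [NormedAddCommGroup H] [InnerProductSpace 𝕜 H]
    (A : H →L[𝕜] F) (b : E →L[𝕜] H) {C : ℝ}
    (h : ∀ z : H →L[𝕜] H, IsCompactOperator z → ‖z‖ ≤ 1 → ‖A ∘L z ∘L b‖ ≤ C) :
    ‖A ∘L b‖ ≤ C := by
  have hC : 0 ≤ C := (norm_nonneg _).trans (h 0 isCompactOperator_zero (by simp))
  refine opNorm_le_bound _ hC fun x => ?_
  let z := (𝕜 ∙ b x).starProjection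
  have hzx : z (b x) = b x :=
    Submodule.starProjection_eq_self_iff.2 (Submodule.mem_span_singleton_self _)
  calc ‖A (b x)‖ = ‖(A ∘L z ∘L b) x‖ := by simp [z, hzx]
    _ ≤ C * ‖x‖ := le_of_opNorm_le _
        (h z (Submodule.isCompactOperator_starProjection_s8 _) (Submodule.starProjection_norm_le _)) x

def pinching {R ι : Type*} [NonUnitalNonAssocSemiring R] [Fintype ι] (p : ι → R) (y : R) : R :=
  ∑ i, p i * y * p i

theorem pinching_mul_of_pairwise {R ι : Type*} [NonUnitalSemiring R] [Fintype ι] {p : ι → R}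
    (hidem : ∀ i, IsIdempotentElem (p i)) (horth : Pairwise fun i j => p i * p j = 0)
    (y : R) (j : ι) : pinching p y * p j = p j * y * p j := by
  rw [pinching, Finset.sum_mul, Finset.sum_eq_single j (fun i _ hij => by
    rw [mul_assoc, horth hij, mul_zero]) (by simp), mul_assoc, (hidem j).eq]

theorem mul_pinching_sub_pinching_mul_mul {R ι : Type*} [Ring R] [Fintype ι] {p : ι → R}
    (hidem : ∀ i, IsIdempotentElem (p i)) (horth : Pairwise fun i j => p i * p j = 0)
    (u y : R) (j : ι) :
    (u * pinching p y - pinching p (u * y)) * p j = (u * p j - p j * u) * y * p j := by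
  rw [sub_mul, mul_assoc, pinching_mul_of_pairwise hidem horth,
    pinching_mul_of_pairwise hidem horth]
  noncomm_ring

theorem mul_one_sub_sum_mul_sub {R ι : Type*} [Ring R] (s : Finset ι) (p : ι → R) {u v : R}
    (huv : u * v = 1) :
    u * (1 - ∑ i ∈ s, p i) * v - (1 - ∑ i ∈ s, p i) = -∑ i ∈ s, (u * p i * v - p i) := by
  rw [mul_sub, mul_one, sub_mul, huv, Finset.mul_sum, Finset.sum_mul, Finset.sum_sub_distrib]
  abel

section CStarRing

variable {R : Type*} [NormedRing R] [StarRing R] [CStarRing R]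

theorem norm_le_one_of_star_mul_self_eq_one {u : R} (hu : star u * u = 1) : ‖u‖ ≤ 1 := by
  have h : ‖u‖ * ‖u‖ ≤ 1 := by
    rw [← CStarRing.norm_star_mul_self, hu]
    exact IsStarProjection.norm_le _ (.one R)
  nlinarith [norm_nonneg u]

theorem norm_star_le_one_of_mul_star_eq_one {u : R} (hu : u * star u = 1) : ‖star u‖ ≤ 1 :=
  norm_le_one_of_star_mul_self_eq_one (by rwa [star_star])

theorem norm_mul_mul_star_sub_le {p u : R} (hp : IsStarProjection p) (hu : u * star u = 1) :
    ‖u * p * star u - p‖ ≤ ‖(u * p - p * u) * star u * p‖ + ‖(u * p - p * u) * p‖ := by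
  have hpp : p * p = p := hp.isIdempotentElem.eq
  have hps : star p = p := hp.isSelfAdjoint.star_eq
  have h_left : (u * p * star u - p) * p = (u * p - p * u) * star u * p := by
    simp only [sub_mul, mul_assoc, hu, mul_one]
  have h_right : star ((u * p * star u - p) * (1 - p)) = (u * p - p * u) * p * star u := by
    simp only [star_mul, star_sub, star_star, hps, mul_assoc, sub_mul, mul_sub, mul_one, hpp]
    abel
  calc ‖u * p * star u - p‖ = ‖(u * p * star u - p) * p + (u * p * star u - p) * (1 - p)‖ := by
        rw [← mul_add, add_sub_cancel, mul_one]
    _ ≤ ‖(u * p * star u - p) * p‖ + ‖(u * p * star u - p) * (1 - p)‖ := norm_add_le _ _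
    _ ≤ ‖(u * p - p * u) * star u * p‖ + ‖(u * p - p * u) * p‖ := by
      rw [h_left, ← norm_star ((u * p * star u - p) * (1 - p)), h_right]
      gcongr
      exact (norm_mul_le _ _).trans
        (mul_le_of_le_one_right (norm_nonneg _) (norm_star_le_one_of_mul_star_eq_one hu))

end CStarRing

section Operator

variable {𝕜 H ι : Type*} [RCLike 𝕜] [NormedAddCommGroup H] [InnerProductSpace 𝕜 H]
  [CompleteSpace H] [Fintype ι] {p : ι → H →L[𝕜] H} {u : H →L[𝕜] H} {C : ℝ}

theorem norm_commutator_mul_mul_le_of_pinching (hp : ∀ i, IsStarProjection (p i))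
    (horth : Pairwise fun i j => p i * p j = 0) (hu : star u * u = 1)
    (hbound : ∀ y : H →L[𝕜] H, IsCompactOperator y → ‖y‖ ≤ 1 →
      ‖u * pinching p (star u * y) - pinching p y‖ ≤ C)
    (j : ι) (y : H →L[𝕜] H) (hy : IsCompactOperator y) (hy1 : ‖y‖ ≤ 1) :
    ‖(u * p j - p j * u) * y * p j‖ ≤ C := by
  have huy : ‖u * y‖ ≤ 1 :=
    (norm_mul_le_of_le (norm_le_one_of_star_mul_self_eq_one hu) hy1).trans_eq (mul_one 1)
  have h := hbound (u * y) (hy.continuous_comp u.continuous) huy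
  rw [← mul_assoc, hu, one_mul] at h
  calc ‖(u * p j - p j * u) * y * p j‖
      = ‖(u * pinching p y - pinching p (u * y)) * p j‖ := by
        rw [mul_pinching_sub_pinching_mul_mul (fun i => (hp i).isIdempotentElem) horth]
    _ ≤ ‖u * pinching p y - pinching p (u * y)‖ * ‖p j‖ := norm_mul_le _ _
    _ ≤ C * 1 := by
      gcongr
      · exact (norm_nonneg _).trans h
      · exact (hp j).norm_le
    _ = C := mul_one C

theorem norm_mul_mul_star_sub_le_two_mul_of_pinching (hp : ∀ i, IsStarProjection (p i))
    (horth : Pairwise fun i j => p i * p j = 0) (hu : star u * u = 1) (hu' : u * star u = 1)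
    (hbound : ∀ y : H →L[𝕜] H, IsCompactOperator y → ‖y‖ ≤ 1 →
      ‖u * pinching p (star u * y) - pinching p y‖ ≤ C) (j : ι) :
    ‖u * p j * star u - p j‖ ≤ 2 * C := by
  have hcomm := norm_commutator_mul_mul_le_of_pinching hp horth hu hbound j
  have h₁ : ‖(u * p j - p j * u) * star u * p j‖ ≤ C := by
    refine norm_comp_le_of_forall_isCompactOperator _ _ fun z hz hz1 => ?_
    simpa only [mul_def, comp_assoc] using hcomm _ (hz.continuous_comp (star u).continuous)
      ((norm_mul_le_of_le (norm_star_le_one_of_mul_star_eq_one hu') hz1).trans_eq (mul_one 1))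
  have h₂ : ‖(u * p j - p j * u) * p j‖ ≤ C :=
    norm_comp_le_of_forall_isCompactOperator _ _ fun z hz hz1 => by
      simpa only [mul_def, comp_assoc] using hcomm z hz hz1
  linarith [norm_mul_mul_star_sub_le (hp j) hu']

end Operator

theorem pinching_orbit_finite_family_estimate_general
    {H : Type*} [NormedAddCommGroup H] [InnerProductSpace ℂ H] [CompleteSpace H]
    (w : ℕ) (p : Fin w → H →L[ℂ] H)
    (hsa : ∀ i, IsSelfAdjoint (p i))
    (hidem : ∀ i, p i * p i = p i)
    (horth : ∀ i j, i ≠ j → p i * p j = 0)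
    (u : H →L[ℂ] H) (hu1 : star u * u = 1) (hu2 : u * star u = 1)
    (C : ℝ)
    (hbound : ∀ y : H →L[ℂ] H, IsCompactOperator ⇑y → ‖y‖ ≤ 1 →
      ‖u * (∑ i, p i * (star u * y) * p i) - ∑ i, p i * y * p i‖ ≤ C) :
    (∀ i, ‖u * p i * star u - p i‖ ≤ 2 * w * C) ∧
    ‖u * (1 - ∑ i, p i) * star u - (1 - ∑ i, p i)‖ ≤ 2 * w * C := by
  have hmain : ∀ i, ‖u * p i * star u - p i‖ ≤ 2 * C :=
    norm_mul_mul_star_sub_le_two_mul_of_pinching (fun i => ⟨hidem i, hsa i⟩)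
      (fun i j => horth i j) hu1 hu2 hbound
  refine ⟨fun i => ?_, ?_⟩
  · have hw : (1 : ℝ) ≤ w := by exact_mod_cast i.pos
    have hC : 0 ≤ C := by linarith [norm_nonneg (u * p i * star u - p i), hmain i]
    calc ‖u * p i * star u - p i‖ ≤ 2 * C := hmain i
      _ ≤ 2 * w * C := by nlinarith
  · rw [mul_one_sub_sum_mul_sub _ _ hu2, norm_neg]
    calc ‖∑ i, (u * p i * star u - p i)‖ ≤ ∑ i, ‖u * p i * star u - p i‖ := norm_sum_le _ _
      _ ≤ ∑ _i : Fin w, 2 * C := Finset.sum_le_sum fun i _ => hmain i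
      _ = 2 * w * C := by
        simp only [Finset.sum_const, Finset.card_univ, Fintype.card_fin, nsmul_eq_mul]; ring

/-- For a finite family `p 1, …, p w` of mutually orthogonal projections with
pinching `P y = ∑ i, p i * y * p i`, if `u` is a unitary with `u - 1` compact and `C ≥ 0`
satisfies `‖u * P (u* * y) - P y‖ ≤ C` for all compact `y` with `‖y‖ ≤ 1`, then
`‖u * p i * u* - p i‖ ≤ 2wC` for every `i ∈ {0, 1, …, w}` (index `0` standing for the
complementary projection `p₀ = 1 - ∑ i, p i`). -/
theorem pinching_orbit_finite_family_estimate
    {H : Type*} [NormedAddCommGroup H] [InnerProductSpace ℂ H] [CompleteSpace H]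
    [TopologicalSpace.SeparableSpace H]
    (hinf : ¬ FiniteDimensional ℂ H)
    (w : ℕ) (p : Fin w → H →L[ℂ] H)
    (hsa : ∀ i, IsSelfAdjoint (p i))
    (hidem : ∀ i, p i * p i = p i)
    (horth : ∀ i j, i ≠ j → p i * p j = 0)
    (u : H →L[ℂ] H) (hu1 : star u * u = 1) (hu2 : u * star u = 1)
    (hucpt : IsCompactOperator ⇑(u - 1))
    (C : ℝ) (hC : 0 ≤ C)
    (hbound : ∀ y : H →L[ℂ] H, IsCompactOperator ⇑y → ‖y‖ ≤ 1 →
      ‖u * (∑ i, p i * (star u * y) * p i) - ∑ i, p i * y * p i‖ ≤ C) :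
    (∀ i, ‖u * p i * star u - p i‖ ≤ 2 * w * C) ∧
    ‖u * (1 - ∑ i, p i) * star u - (1 - ∑ i, p i)‖ ≤ 2 * w * C :=
  pinching_orbit_finite_family_estimate_general w p hsa hidem horth u hu1 hu2 C hbound
end

section
/- Let s be an invertible bounded operator on H, and let p and q be orthogonal projections with s p = q s. Let |s| = (s*s)^{1/2} (the positive square root, which is invertible). Then: (i) p commutes with |s| and with |s|^{-1}; (ii) σ := s·|s|^{-1} is unitary; (iii) σ p σ* = q; and (iv) if s − 1 is compact, then σ − 1 is compact. -/
/-!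
Since `s p = q s` with `p`, `q` self-adjoint, `p` commutes with `s* s`, hence with everything in
its continuous functional calculus; as positive square roots are unique, `m = √(s* s)`, so `p`
commutes with `m` and `m⁻¹`. Then `σ = s m⁻¹` is invertible with `σ* σ = m⁻¹ (s* s) m⁻¹ = 1`, so
it is unitary, and `σ p = q σ` gives `σ p σ* = q`.

For compactness, argue modulo compact operators: `s ≡ 1` gives `s* s ≡ 1` because adjoints of
compact operators are compact; `m - 1 = (1 + m)⁻¹ (m² - 1)` with `1 + m` invertible as
`m ≥ 0`, so `m ≡ 1`; finally `σ - 1 = ((s - 1) - (m - 1)) m⁻¹ ≡ 0`.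
-/

open ContinuousLinearMap Metric
open scoped Ring

theorem TotallyBounded.image_of_sq_dist_le {X Y Z : Type*} [PseudoMetricSpace Y]
    [PseudoMetricSpace Z] {f : X → Y} {g : X → Z} {s : Set X} {C : ℝ}
    (hg : TotallyBounded (g '' s))
    (hfg : ∀ x ∈ s, ∀ y ∈ s, dist (f x) (f y) ^ 2 ≤ C * dist (g x) (g y)) :
    TotallyBounded (f '' s) := by
  rw [Metric.totallyBounded_iff]
  intro ε hε
  have hδ : 0 < ε ^ 2 / (|C| + 1) := by positivity
  obtain ⟨t, hts, htfin, hcover⟩ := Set.exists_subset_image_finite_and.mp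
    (totallyBounded_iff_subset.mp hg _ (dist_mem_uniformity hδ))
  refine ⟨f '' t, htfin.image f, ?_⟩
  rintro _ ⟨x, hx, rfl⟩
  obtain ⟨_, ⟨y, hy, rfl⟩, hclose⟩ := Set.mem_iUnion₂.mp (hcover ⟨x, hx, rfl⟩)
  refine Set.mem_iUnion₂.mpr ⟨f y, ⟨y, hy, rfl⟩, mem_ball.mpr ?_⟩
  have hxy : dist (g x) (g y) < ε ^ 2 / (|C| + 1) := hclose
  have hsq : dist (f x) (f y) ^ 2 < ε ^ 2 := by
    calc dist (f x) (f y) ^ 2 ≤ C * dist (g x) (g y) := hfg x hx y (hts hy)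
      _ ≤ |C| * dist (g x) (g y) := by gcongr; exact le_abs_self C
      _ ≤ |C| * (ε ^ 2 / (|C| + 1)) := by gcongr
      _ < (|C| + 1) * (ε ^ 2 / (|C| + 1)) := by gcongr; linarith
      _ = ε ^ 2 := by field_simp
  exact lt_of_pow_lt_pow_left₀ 2 hε.le hsq

section NormedSpace

variable {𝕜 E : Type*} [NontriviallyNormedField 𝕜] [NormedAddCommGroup E] [NormedSpace 𝕜 E]

theorem IsCompactOperator.sub_one_of_mul_self_sub_one {m : E →L[𝕜] E} (hm : IsUnit (1 + m))
    (h : IsCompactOperator ⇑(m * m - 1)) : IsCompactOperator ⇑(m - 1) := by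
  have hfactor : (1 + m)⁻¹ʳ * (m * m - 1) = m - 1 :=
    (Ring.inverse_mul_eq_iff_eq_mul _ _ _ hm).mpr (by noncomm_ring)
  rw [← hfactor]
  exact h.clm_comp _

theorem IsCompactOperator.mul_ringInverse_sub_one {s m : E →L[𝕜] E}
    (hs : IsCompactOperator ⇑(s - 1)) (hmu : IsUnit m) (hm : IsCompactOperator ⇑(m - 1)) :
    IsCompactOperator ⇑(s * m⁻¹ʳ - 1) := by
  have hfactor : s * m⁻¹ʳ - 1 = (s - 1) * m⁻¹ʳ - (m - 1) * m⁻¹ʳ := by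
    rw [sub_mul, sub_mul, one_mul, Ring.mul_inverse_cancel _ hmu]
    abel
  rw [hfactor]
  exact (hs.comp_clm _).sub (hm.comp_clm _)

end NormedSpace

section InnerProductSpace

variable {𝕜 E F : Type*} [RCLike 𝕜]
  [NormedAddCommGroup E] [InnerProductSpace 𝕜 E] [CompleteSpace E]
  [NormedAddCommGroup F] [InnerProductSpace 𝕜 F] [CompleteSpace F]

theorem ContinuousLinearMap.sq_norm_adjoint_apply_le (T : E →L[𝕜] F) (w : F) :
    ‖adjoint T w‖ ^ 2 ≤ ‖w‖ * ‖T (adjoint T w)‖ := by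
  rw [apply_norm_sq_eq_inner_adjoint_left, adjoint_adjoint]
  calc RCLike.re (inner 𝕜 (T (adjoint T w)) w) ≤ ‖inner 𝕜 (T (adjoint T w)) w‖ :=
        RCLike.re_le_norm _
    _ ≤ ‖T (adjoint T w)‖ * ‖w‖ := norm_inner_le_norm _ _
    _ = ‖w‖ * ‖T (adjoint T w)‖ := mul_comm _ _

/- The unit ball is mapped by `T ∘ T†` to a totally bounded set, and `sq_norm_adjoint_apply_le`
transfers total boundedness to its image under `T†`. -/
theorem IsCompactOperator.adjoint {T : E →L[𝕜] F} (hT : IsCompactOperator T) :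
    IsCompactOperator (ContinuousLinearMap.adjoint T) := by
  set S := ContinuousLinearMap.adjoint T
  obtain ⟨K, hK, hTSK⟩ := IsCompactOperator.image_closedBall_subset_compact
    (f := ((T ∘L S : F →L[𝕜] F) : F →ₗ[𝕜] F)) (hT.comp_clm S) 1
  have hdist : ∀ x ∈ closedBall (0 : F) 1, ∀ y ∈ closedBall (0 : F) 1,
      dist (S x) (S y) ^ 2 ≤ 2 * dist (T (S x)) (T (S y)) := by
    intro x hx y hy
    have hxy : ‖x - y‖ ≤ 2 := by
      rw [mem_closedBall_zero_iff] at hx hy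
      linarith [norm_sub_le x y]
    simp only [dist_eq_norm, ← map_sub]
    exact (sq_norm_adjoint_apply_le T (x - y)).trans (by gcongr)
  have hbounded := (hK.totallyBounded.subset hTSK).image_of_sq_dist_le hdist
  exact (isCompactOperator_iff_isCompact_closure_image_closedBall (S : F →ₗ[𝕜] E) one_pos).mpr
    (hbounded.closure.isCompact_of_isClosed isClosed_closure)

theorem IsCompactOperator.star_mul_self_sub_one {s : E →L[𝕜] E}
    (h : IsCompactOperator ⇑(s - 1)) : IsCompactOperator ⇑(star s * s - 1) := by
  have hfactor : star s * s - 1 = star s * (s - 1) + star (s - 1) := by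
    rw [star_sub, star_one]
    noncomm_ring
  rw [hfactor, star_eq_adjoint (s - 1)]
  exact (h.clm_comp (star s)).add h.adjoint

end InnerProductSpace

theorem SemiconjBy.commute_star_mul_self {R : Type*} [Monoid R] [StarMul R] {s p q : R}
    (h : SemiconjBy s p q) (hp : IsSelfAdjoint p) (hq : IsSelfAdjoint q) :
    Commute (star s * s) p := by
  have hstar := h.star_star_star
  rw [hp.star_eq, hq.star_eq] at hstar
  exact hstar.mul_left h

theorem IsUnit.of_mul_self_eq_star_mul_self {R : Type*} [Monoid R] [StarMul R] {s m : R}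
    (hs : IsUnit s) (h : m * m = star s * s) : IsUnit m :=
  (isUnit_pow_iff two_ne_zero).mp (by rw [sq, h]; exact hs.star.mul hs)

theorem mul_ringInverse_mem_unitary {R : Type*} [Semiring R] [StarRing R] {s m : R}
    (hs : IsUnit s) (hm : IsSelfAdjoint m) (h : m * m = star s * s) :
    s * m⁻¹ʳ ∈ unitary R := by
  have hmu := hs.of_mul_self_eq_star_mul_self h
  rw [(hs.mul hmu.ringInverse).mem_unitary_iff_star_mul_self, star_mul, ← Ring.inverse_star,
    hm.star_eq]
  calc m⁻¹ʳ * star s * (s * m⁻¹ʳ) = m⁻¹ʳ * (star s * s) * m⁻¹ʳ := by simp only [mul_assoc]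
    _ = m⁻¹ʳ * m * (m * m⁻¹ʳ) := by rw [← h]; simp only [mul_assoc]
    _ = 1 := by rw [Ring.inverse_mul_cancel _ hmu, Ring.mul_inverse_cancel _ hmu, one_mul]

theorem polar_part_intertwines_projections_general
    {H : Type*} [NormedAddCommGroup H] [InnerProductSpace ℂ H] [CompleteSpace H]
    (s : H →L[ℂ] H) (hs : IsUnit s)
    (p q : H →L[ℂ] H)
    (hpsa : IsSelfAdjoint p)
    (hqsa : IsSelfAdjoint q)
    (hspq : s * p = q * s)
    (m : H →L[ℂ] H) (hmpos : m.IsPositive) (hmsq : m * m = star s * s) :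
    IsUnit m ∧
    Commute p m ∧ Commute p (Ring.inverse m) ∧
    (star (s * Ring.inverse m) * (s * Ring.inverse m) = 1 ∧
      (s * Ring.inverse m) * star (s * Ring.inverse m) = 1) ∧
    (s * Ring.inverse m) * p * star (s * Ring.inverse m) = q ∧
    (IsCompactOperator ⇑(s - 1) → IsCompactOperator ⇑(s * Ring.inverse m - 1)) := by
  have hm0 : 0 ≤ m := (nonneg_iff_isPositive m).mpr hmpos
  have hmu : IsUnit m := hs.of_mul_self_eq_star_mul_self hmsq
  have hpm : Commute p m := by
    rw [← CFC.sqrt_unique hmsq hm0]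
    exact (SemiconjBy.commute_star_mul_self hspq hpsa hqsa |>.cfcₙ_nnreal NNReal.sqrt).symm
  have hpm' : Commute p m⁻¹ʳ := by
    obtain ⟨u, rfl⟩ := hmu
    rw [Ring.inverse_unit]
    exact hpm.units_inv_right
  have hσ := mul_ringInverse_mem_unitary hs hm0.isSelfAdjoint hmsq
  have hσpq : s * m⁻¹ʳ * p = q * (s * m⁻¹ʳ) := SemiconjBy.mul_left hspq hpm'.symm
  refine ⟨hmu, hpm, hpm', Unitary.mem_iff.mp hσ, ?_, fun hs1 => ?_⟩
  · rw [hσpq, mul_assoc, Unitary.mul_star_self_of_mem hσ, mul_one]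
  · have h1m : IsUnit (1 + m) := (isStrictlyPositive_one.add_nonneg hm0).isUnit
    have hm1 := (hmsq ▸ hs1.star_mul_self_sub_one).sub_one_of_mul_self_sub_one h1m
    exact hs1.mul_ringInverse_sub_one hmu hm1

/-- Let `s` be an invertible bounded operator, `p, q` orthogonal projections
with `s * p = q * s`, and let `m = |s|` be the (unique) positive square root of `s* s`. Then
`m` is invertible, `p` commutes with `m` and with `m⁻¹`, `σ := s * m⁻¹` is unitary,
`σ p σ* = q`, and if `s - 1` is compact then `σ - 1` is compact. -/
theorem polar_part_intertwines_projections
    {H : Type*} [NormedAddCommGroup H] [InnerProductSpace ℂ H] [CompleteSpace H]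
    [TopologicalSpace.SeparableSpace H]
    (hinf : ¬ FiniteDimensional ℂ H)
    (s : H →L[ℂ] H) (hs : IsUnit s)
    (p q : H →L[ℂ] H)
    (hpsa : IsSelfAdjoint p) (hpidem : p * p = p)
    (hqsa : IsSelfAdjoint q) (hqidem : q * q = q)
    (hspq : s * p = q * s)
    (m : H →L[ℂ] H) (hmpos : m.IsPositive) (hmsq : m * m = star s * s) :
    IsUnit m ∧
    Commute p m ∧ Commute p (Ring.inverse m) ∧
    (star (s * Ring.inverse m) * (s * Ring.inverse m) = 1 ∧
      (s * Ring.inverse m) * star (s * Ring.inverse m) = 1) ∧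
    (s * Ring.inverse m) * p * star (s * Ring.inverse m) = q ∧
    (IsCompactOperator ⇑(s - 1) → IsCompactOperator ⇑(s * Ring.inverse m - 1)) :=
  polar_part_intertwines_projections_general s hs p q hpsa hqsa hspq m hmpos hmsq
end

section
/- Let (p_i)_{i∈I} be a family (indexed by a countable set I) of mutually orthogonal nonzero orthogonal projections on H, and let u be a unitary operator on H with u − 1 compact. Suppose that Σ_{i∈I} (u p_i u*) x (u p_i u*) = Σ_{i∈I} p_i x p_i for every compact operator x. Then there exists a bijection σ : I → I such that u p_i u* = p_{σ(i)} for every i ∈ I, u p_0 u* = p_0, σ(i) = i for all but finitely many i, and whenever σ(i) ≠ i the projection p_i has finite rank (equal to the rank of p_{σ(i)}). -/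
/-!
Write `q_i = u p_i u*`. Testing the hypothesis on the rank-one operator `|ξ⟩⟨ξ|` with `ξ` in the
range of some `p_j` gives `∑ |q_i ξ⟩⟨q_i ξ| = |ξ⟩⟨ξ|`, which forces every `q_i ξ` to be a multiple
of `ξ`, hence `0` or `ξ`, and not all of them `0`. So every nonzero vector of the range of `p_j` is
fixed by some `q_i`; by orthogonality the index does not depend on the vector, so `p_j ≤ q_i`.
Symmetrically each `q_i` lies under some `p_j`, and for two families of nonzero orthogonal
projections this double domination is a bijection `σ` with `q_i = p_{σ i}`.

Both `u` and `u*` permute the `p_i`, so they leave the range of `p₀` invariant and `u` commutes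
with `p₀`. If `σ i ≠ i` then `p_i u p_i = 0`, so `p_i = -p_i (u - 1) p_i` is compact and has finite
rank; infinitely many such `i` would give an orthonormal sequence `ξ_n` with `‖(u - 1) ξ_n‖ ≥ 1`,
which is impossible for a compact operator.
-/

open scoped InnerProductSpace
open InnerProductSpace ContinuousLinearMap Filter Topology

section StarRing

/- For self-adjoint idempotents, `f * e = e` says `e ≤ f`. -/

variable {R : Type*} [NonUnitalSemiring R] [StarRing R]

theorem IsSelfAdjoint.mul_eq_left_of_mul_eq_right {e f : R} (he : IsSelfAdjoint e)
    (hf : IsSelfAdjoint f) (h : f * e = e) : e * f = e := by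
  simpa [he.star_eq, hf.star_eq] using congr(star $h)

theorem IsSelfAdjoint.commute_of_mul_mul_eq {e u : R} (he : IsSelfAdjoint e)
    (h : e * u * e = u * e) (h' : e * star u * e = star u * e) : Commute e u := by
  have h'' : e * u * e = e * u := by
    simpa [he.star_eq, mul_assoc] using congr(star $h')
  exact h''.symm.trans h

theorem eq_and_eq_of_le_of_le {ι : Type*} {p : ι → R} {f : R}
    (hp : ∀ i, IsSelfAdjoint (p i)) (hp_orth : Pairwise fun i j ↦ p i * p j = 0)
    (hf : IsSelfAdjoint f) {a c : ι} (ha : p a ≠ 0) (hfa : f * p a = p a) (hcf : p c * f = f) :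
    c = a ∧ f = p a := by
  have hac : p a * p c = p a := by
    calc p a * p c = p a * f * p c := by rw [(hp a).mul_eq_left_of_mul_eq_right hf hfa]
      _ = p a := by
          rw [mul_assoc, hf.mul_eq_left_of_mul_eq_right (hp c) hcf,
            (hp a).mul_eq_left_of_mul_eq_right hf hfa]
  obtain rfl : c = a := by
    by_contra hne
    exact ha (hac ▸ hp_orth (Ne.symm hne))
  exact ⟨rfl, hcf.symm.trans ((hp c).mul_eq_left_of_mul_eq_right hf hfa)⟩

theorem exists_equiv_eq_of_forall_exists_le {ι κ : Type*} {p : ι → R} {q : κ → R}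
    (hp : ∀ i, IsSelfAdjoint (p i)) (hq : ∀ k, IsSelfAdjoint (q k))
    (hp_orth : Pairwise fun i j ↦ p i * p j = 0) (hq_orth : Pairwise fun k l ↦ q k * q l = 0)
    (hp0 : ∀ i, p i ≠ 0) (hq0 : ∀ k, q k ≠ 0)
    (hpq : ∀ i, ∃ k, q k * p i = p i) (hqp : ∀ k, ∃ i, p i * q k = q k) :
    ∃ σ : κ ≃ ι, ∀ k, q k = p (σ k) := by
  choose τ hτ using hpq
  choose ρ hρ using hqp
  have hρτ (i : ι) : ρ (τ i) = i ∧ q (τ i) = p i :=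
    eq_and_eq_of_le_of_le hp hp_orth (hq _) (hp0 i) (hτ i) (hρ _)
  have hτρ (k : κ) : τ (ρ k) = k :=
    (eq_and_eq_of_le_of_le hq hq_orth (hp _) (hq0 k) (hρ k) (hτ _)).1
  refine ⟨⟨ρ, τ, fun k ↦ hτρ k, fun i ↦ (hρτ i).1⟩, fun k ↦ ?_⟩
  simpa [hτρ k] using (hρτ (ρ k)).2

end StarRing

section Module

variable {R M : Type*} [Semiring R] [TopologicalSpace M] [AddCommGroup M] [Module R M]

theorem exists_forall_apply_eq_self_of_forall_exists {ι : Type*} {q : ι → M →L[R] M}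
    (hq_orth : Pairwise fun i j ↦ q i * q j = 0) {V : Submodule R M} (hV : V ≠ ⊥)
    (h : ∀ x ∈ V, x ≠ 0 → ∃ i, q i x = x) : ∃ i, ∀ x ∈ V, q i x = x := by
  have hkill {i j : ι} {x : M} (hij : i ≠ j) (hx : q j x = x) : q i x = 0 := by
    rw [← hx, ← mul_apply_eq_comp, hq_orth hij, zero_apply]
  obtain ⟨x₀, hx₀V, hx₀⟩ := Submodule.exists_mem_ne_zero_of_ne_bot hV
  obtain ⟨a, ha⟩ := h x₀ hx₀V hx₀
  refine ⟨a, fun x hxV ↦ ?_⟩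
  by_contra hxa
  have hx : x ≠ 0 := by rintro rfl; exact hxa (map_zero _)
  obtain ⟨b, hb⟩ := h x hxV hx
  have hax : q a x = 0 := hkill (by rintro rfl; exact hxa hb) hb
  have hsum : q a (x₀ + x) = x₀ := by rw [map_add, ha, hax, add_zero]
  have hsum0 : x₀ + x ≠ 0 := fun h0 ↦ hx₀ (by rw [← hsum, h0, map_zero])
  obtain ⟨c, hc⟩ := h (x₀ + x) (V.add_mem hx₀V hxV) hsum0
  rcases eq_or_ne c a with rfl | hca
  · exact hx (by simpa [hsum] using hc)
  · exact hx₀ (hsum ▸ hkill (Ne.symm hca) hc)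

theorem mul_mul_eq_mul_of_forall_exists_mul_eq {ι : Type*} {p : ι → M →L[R] M}
    {p₀ v : M →L[R] M} (hp₀ : IsIdempotentElem p₀) (hp₀_fix : ∀ ξ, p₀ ξ = ξ ↔ ∀ i, p i ξ = 0)
    (hv : ∀ i, ∃ j, p i * v = v * p j) : p₀ * v * p₀ = v * p₀ := by
  ext ξ
  simp only [mul_apply_eq_comp]
  refine (hp₀_fix _).mpr fun i ↦ ?_
  obtain ⟨j, hj⟩ := hv i
  have hξ : p j (p₀ ξ) = 0 := (hp₀_fix _).mp (by rw [← mul_apply_eq_comp, hp₀.eq]) j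
  rw [← mul_apply_eq_comp, hj, mul_apply_eq_comp, hξ, map_zero]

end Module

theorem ContinuousLinearMap.IsIdempotentElem.finiteDimensional_range_of_isCompactOperator
    {𝕜 E : Type*} [NontriviallyNormedField 𝕜] [CompleteSpace 𝕜] [NormedAddCommGroup E]
    [NormedSpace 𝕜 E] {p : E →L[𝕜] E} (hp : IsIdempotentElem p) (hpc : IsCompactOperator p) :
    FiniteDimensional 𝕜 p.range := by
  have hid := hpc.restrict (V := p.range) (fun v _ ↦ LinearMap.mem_range_self _ v)
    hp.isClosed_range
  have h_eq : ⇑((p : E →ₗ[𝕜] E).restrict fun v _ ↦ LinearMap.mem_range_self _ v) = id :=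
    funext fun v ↦ Subtype.ext ((LinearMap.IsIdempotentElem.mem_range_iff hp.toLinearMap).mp v.2)
  rw [h_eq] at hid
  exact FiniteDimensional.of_isCompactOperator_id hid

theorem ContinuousLinearMap.IsIdempotentElem.isCompactOperator_of_mul_mul_eq_zero
    {R M : Type*} [Ring R] [TopologicalSpace M] [AddCommGroup M] [IsTopologicalAddGroup M]
    [Module R M] {p u : M →L[R] M} (hp : IsIdempotentElem p) (hu : IsCompactOperator ⇑(u - 1))
    (h : p * u * p = 0) : IsCompactOperator p := by
  have hp_eq : p = -(p * (u - 1) * p) := by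
    rw [mul_sub, sub_mul, h, mul_one, hp.eq, zero_sub, neg_neg]
  rw [hp_eq]
  exact ((hu.comp_clm p).clm_comp p).neg

section Hilbert

variable {𝕜 H : Type*} [RCLike 𝕜] [NormedAddCommGroup H] [InnerProductSpace 𝕜 H]

theorem isCompactOperator_rankOne (x y : H) : IsCompactOperator (rankOne 𝕜 x y) :=
  (isCompactOperator_of_locallyCompactSpace_rng (.toSpanSingleton 𝕜 x)).comp_clm (innerSL 𝕜 y)

theorem inner_rankOne_self_apply (x η : H) :
    ⟪η, rankOne 𝕜 x x η⟫_𝕜 = ((‖⟪η, x⟫_𝕜‖ ^ 2 : ℝ) : 𝕜) := by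
  rw [rankOne_apply, inner_smul_right, ← inner_conj_symm, RCLike.conj_mul]
  norm_cast

theorem ContinuousLinearMap.IsIdempotentElem.apply_eq_zero_or_apply_eq_self
    {e : H →L[𝕜] H} (he : IsIdempotentElem e) {x : H} {c : 𝕜} (h : e x = c • x) :
    e x = 0 ∨ e x = x := by
  have hc : c • e x = e x := by
    rw [← map_smul, ← h, ← mul_apply_eq_comp, he.eq]
  rcases eq_or_ne c 1 with rfl | hc1
  · exact .inr (by simpa using h)
  · have : (c - 1) • e x = 0 := by rw [sub_smul, hc, one_smul, sub_self]
    exact .inl ((smul_eq_zero.mp this).resolve_left (sub_ne_zero.mpr hc1))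

theorem exists_apply_eq_self_of_tsum_rankOne_eq {ι : Type*} {q : ι → H →L[𝕜] H}
    (hq : ∀ i, IsIdempotentElem (q i)) {ξ : H} (hξ : ξ ≠ 0)
    (h : ∑' i, rankOne 𝕜 (q i ξ) (q i ξ) = rankOne 𝕜 ξ ξ) : ∃ i, q i ξ = ξ := by
  have hsum : HasSum (fun i ↦ rankOne 𝕜 (q i ξ) (q i ξ)) (rankOne 𝕜 ξ ξ) := by
    -- a non-summable `tsum` is `0`, which `rankOne 𝕜 ξ ξ` is not
    refine h ▸ (Summable.hasSum ?_)
    by_contra hns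
    rw [tsum_eq_zero_of_not_summable hns] at h
    exact rankOne_ne_zero hξ hξ h.symm
  have hcoef (η : H) : HasSum (fun i ↦ ‖⟪η, q i ξ⟫_𝕜‖ ^ 2) (‖⟪η, ξ⟫_𝕜‖ ^ 2) := by
    have := ((innerSL 𝕜 η).comp (ContinuousLinearMap.apply 𝕜 H η)).hasSum hsum
    simp only [ContinuousLinearMap.comp_apply, ContinuousLinearMap.apply_apply, innerSL_apply_apply,
      inner_rankOne_self_apply] at this
    exact_mod_cast this
  have hspan (i : ι) : q i ξ ∈ 𝕜 ∙ ξ := by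
    rw [← Submodule.orthogonal_orthogonal (𝕜 ∙ ξ), Submodule.mem_orthogonal]
    intro η hη
    rw [Submodule.mem_orthogonal_singleton_iff_inner_left] at hη
    have h0 : HasSum (fun i ↦ ‖⟪η, q i ξ⟫_𝕜‖ ^ 2) 0 := by simpa [hη] using hcoef η
    simpa using congr_fun ((hasSum_zero_iff_of_nonneg fun _ ↦ by positivity).mp h0) i
  have hdich (i : ι) : q i ξ = 0 ∨ q i ξ = ξ := by
    obtain ⟨c, hc⟩ := Submodule.mem_span_singleton.mp (hspan i)
    exact (hq i).apply_eq_zero_or_apply_eq_self hc.symm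
  by_contra! hnone
  have hzero (i : ι) : q i ξ = 0 := (hdich i).resolve_right (hnone i)
  simp only [hzero, map_zero, tsum_zero] at h
  exact rankOne_ne_zero hξ hξ h.symm

theorem IsCompactOperator.tendsto_apply_orthonormal {F : Type*} [NormedAddCommGroup F]
    [InnerProductSpace 𝕜 F] [CompleteSpace H] [CompleteSpace F] {T : H →L[𝕜] F}
    (hT : IsCompactOperator T) {e : ℕ → H} (he : Orthonormal 𝕜 e) :
    Tendsto (fun n ↦ T (e n)) atTop (𝓝 0) := by
  have hweak (y : F) : Tendsto (fun n ↦ ⟪y, T (e n)⟫_𝕜) atTop (𝓝 0) := by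
    have h := (he.inner_products_summable (T.adjoint y)).tendsto_atTop_zero
    have h_eq : (fun n ↦ ‖⟪y, T (e n)⟫_𝕜‖) = fun n ↦ √(‖⟪e n, T.adjoint y⟫_𝕜‖ ^ 2) := by
      ext n
      rw [Real.sqrt_sq (norm_nonneg _), ContinuousLinearMap.adjoint_inner_right, norm_inner_symm]
    rw [tendsto_zero_iff_norm_tendsto_zero, h_eq, ← Real.sqrt_zero]
    exact (Real.continuous_sqrt.tendsto 0).comp h
  -- every subsequence has a norm-convergent subsequence, whose limit is weakly `0`
  refine tendsto_of_subseq_tendsto fun ns hns ↦ ?_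
  have hmem (n : ℕ) : T (e (ns n)) ∈ closure (T '' Metric.closedBall 0 1) :=
    subset_closure ⟨e (ns n), by simp [he.1], rfl⟩
  obtain ⟨a, -, φ, hφ, ha⟩ := (hT.isCompact_closure_image_closedBall 1).tendsto_subseq hmem
  have haa : ⟪a, a⟫_𝕜 = 0 :=
    tendsto_nhds_unique (tendsto_const_nhds.inner ha) ((hweak a).comp (hns.comp hφ.tendsto_atTop))
  rw [inner_self_eq_zero.mp haa] at ha
  exact ⟨φ, ha⟩

theorem ContinuousLinearMap.IsIdempotentElem.exists_norm_eq_one_apply_eq_self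
    {p : H →L[𝕜] H} (hp : IsIdempotentElem p) (hp0 : p ≠ 0) : ∃ ξ : H, ‖ξ‖ = 1 ∧ p ξ = ξ := by
  obtain ⟨x, hx⟩ : ∃ x, p x ≠ 0 := by
    by_contra! h
    exact hp0 (ContinuousLinearMap.ext h)
  refine ⟨(‖p x‖⁻¹ : 𝕜) • p x, norm_smul_inv_norm hx, ?_⟩
  rw [map_smul, ← mul_apply_eq_comp, hp.eq]

variable [CompleteSpace H]

theorem IsSelfAdjoint.mul_rankOne_self_mul {e : H →L[𝕜] H} (he : IsSelfAdjoint e) (x : H) :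
    e * rankOne 𝕜 x x * e = rankOne 𝕜 (e x) (e x) := by
  rw [ContinuousLinearMap.mul_def, ContinuousLinearMap.mul_def, comp_rankOne,
    rankOne_comp, he.adjoint_eq]

theorem exists_apply_eq_self_of_tsum_conj_eq {ι : Type*} {q r : ι → H →L[𝕜] H}
    (hq : ∀ i, IsStarProjection (q i)) (hr : ∀ i, IsSelfAdjoint (r i))
    (hr_orth : Pairwise fun i j ↦ r i * r j = 0)
    (heq : ∀ x : H →L[𝕜] H, IsCompactOperator x → ∑' i, q i * x * q i = ∑' i, r i * x * r i)
    {ξ : H} (hξ : ξ ≠ 0) {j : ι} (hj : r j ξ = ξ) : ∃ i, q i ξ = ξ := by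
  refine exists_apply_eq_self_of_tsum_rankOne_eq (fun i ↦ (hq i).isIdempotentElem) hξ ?_
  calc ∑' i, rankOne 𝕜 (q i ξ) (q i ξ) = ∑' i, q i * rankOne 𝕜 ξ ξ * q i := by
        simp only [(hq _).isSelfAdjoint.mul_rankOne_self_mul]
    _ = ∑' i, r i * rankOne 𝕜 ξ ξ * r i := heq _ (isCompactOperator_rankOne ξ ξ)
    _ = rankOne 𝕜 ξ ξ := by
        rw [tsum_eq_single j fun k hk ↦ ?_, (hr j).mul_rankOne_self_mul, hj]
        rw [(hr k).mul_rankOne_self_mul, ← hj, ← mul_apply_eq_comp, hr_orth hk, zero_apply,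
          map_zero]

theorem exists_mul_eq_self_of_tsum_conj_eq {ι : Type*} {q r : ι → H →L[𝕜] H}
    (hq : ∀ i, IsStarProjection (q i)) (hq_orth : Pairwise fun i j ↦ q i * q j = 0)
    (hr : ∀ i, IsStarProjection (r i)) (hr_orth : Pairwise fun i j ↦ r i * r j = 0)
    (heq : ∀ x : H →L[𝕜] H, IsCompactOperator x → ∑' i, q i * x * q i = ∑' i, r i * x * r i)
    {j : ι} (hj : r j ≠ 0) : ∃ i, q i * r j = r j := by
  have hfix {ξ : H} (hξ : ξ ∈ (r j).range) : r j ξ = ξ :=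
    (LinearMap.IsIdempotentElem.mem_range_iff (hr j).isIdempotentElem.toLinearMap).mp hξ
  have hne : (r j).range ≠ ⊥ := fun h ↦
    hj (ContinuousLinearMap.coe_injective (LinearMap.range_eq_bot.mp h))
  obtain ⟨i, hi⟩ := exists_forall_apply_eq_self_of_forall_exists hq_orth hne fun ξ hξ hξ0 ↦
    exists_apply_eq_self_of_tsum_conj_eq hq (fun k ↦ (hr k).isSelfAdjoint) hr_orth heq hξ0 (hfix hξ)
  exact ⟨i, ContinuousLinearMap.ext fun ξ ↦ hi _ (LinearMap.mem_range_self _ ξ)⟩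

theorem exists_equiv_unitary_conj_eq {ι : Type*} {p : ι → H →L[𝕜] H}
    (hp : ∀ i, IsStarProjection (p i)) (hp_orth : Pairwise fun i j ↦ p i * p j = 0)
    (hp0 : ∀ i, p i ≠ 0) {u : H →L[𝕜] H} (hu : u ∈ unitary (H →L[𝕜] H))
    (heq : ∀ x : H →L[𝕜] H, IsCompactOperator x →
      ∑' i, (u * p i * star u) * x * (u * p i * star u) = ∑' i, p i * x * p i) :
    ∃ σ : ι ≃ ι, ∀ i, u * p i * star u = p (σ i) := by
  set φ := Unitary.conjStarAlgAut 𝕜 _ ⟨u, hu⟩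
  have hq (i : ι) : IsStarProjection (φ (p i)) := (hp i).map φ
  have hq_orth : Pairwise fun i j ↦ φ (p i) * φ (p j) = 0 := fun i j hij ↦ by
    change φ (p i) * φ (p j) = 0
    rw [← map_mul, hp_orth hij, map_zero]
  have hq0 (i : ι) : φ (p i) ≠ 0 := (map_ne_zero_iff φ φ.injective).mpr (hp0 i)
  exact exists_equiv_eq_of_forall_exists_le (fun i ↦ (hp i).isSelfAdjoint)
    (fun i ↦ (hq i).isSelfAdjoint) hp_orth hq_orth hp0 hq0
    (fun i ↦ exists_mul_eq_self_of_tsum_conj_eq hq hq_orth hp hp_orth heq (hp0 i))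
    (fun i ↦ exists_mul_eq_self_of_tsum_conj_eq hp hp_orth hq hq_orth
      (fun x hx ↦ (heq x hx).symm) (hq0 i))

theorem rank_range_unitary_conj {p u : H →L[𝕜] H} (hu : u ∈ unitary (H →L[𝕜] H)) :
    Module.rank 𝕜 (u * p * star u).range = Module.rank 𝕜 p.range := by
  have hinv (v w : H →L[𝕜] H) (h : v * w = 1) (x : H) : v (w x) = x := by
    rw [← mul_apply_eq_comp, h, one_apply_eq_self]
  have hsurj : (star u).range = ⊤ :=
    LinearMap.range_eq_top.mpr fun x ↦ ⟨u x, hinv _ _ (Unitary.star_mul_self_of_mem hu) x⟩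
  rw [ContinuousLinearMap.mul_def, ContinuousLinearMap.mul_def, ContinuousLinearMap.toLinearMap_comp,
    ContinuousLinearMap.toLinearMap_comp, LinearMap.range_comp_of_range_eq_top _ hsurj,
    LinearMap.range_comp]
  exact rank_map_eq (Function.LeftInverse.injective (hinv _ _ (Unitary.star_mul_self_of_mem hu))) _

theorem finite_setOf_mul_mul_eq_zero {ι : Type*} {p : ι → H →L[𝕜] H}
    (hp : ∀ i, IsStarProjection (p i)) (hp_orth : Pairwise fun i j ↦ p i * p j = 0)
    (hp0 : ∀ i, p i ≠ 0) {u : H →L[𝕜] H} (hu : IsCompactOperator ⇑(u - 1)) :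
    {i | p i * u * p i = 0}.Finite := by
  by_contra hinf
  set e := Set.Infinite.natEmbedding _ hinf
  choose ξ hξ_norm hξ_fix using fun i ↦
    (hp i).isIdempotentElem.exists_norm_eq_one_apply_eq_self (hp0 i)
  have hv : Orthonormal 𝕜 fun n ↦ ξ (e n) := by
    refine ⟨fun n ↦ hξ_norm _, fun m n hmn ↦ ?_⟩
    have hne : (e m : ι) ≠ e n := fun h ↦ hmn (e.injective (Subtype.ext h))
    calc ⟪ξ (e m), ξ (e n)⟫_𝕜 = ⟪p (e m) (ξ (e m)), ξ (e n)⟫_𝕜 := by rw [hξ_fix]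
      _ = ⟪ξ (e m), p (e m) (ξ (e n))⟫_𝕜 := (hp _).isSelfAdjoint.isSymmetric _ _
      _ = 0 := by
        rw [← hξ_fix (e n), ← mul_apply_eq_comp, hp_orth hne, zero_apply, inner_zero_right]
  have hlarge (n : ℕ) : 1 ≤ ‖(u - 1) (ξ (e n))‖ := by
    set i : ι := (e n : ι)
    have hmoved : p i (u (ξ i)) = 0 := by
      rw [← hξ_fix i, ← mul_apply_eq_comp, ← mul_apply_eq_comp, (e n).2, zero_apply]
    calc 1 = ‖p i ((u - 1) (ξ i))‖ := by
          rw [sub_apply, map_sub, hmoved, one_apply_eq_self, hξ_fix, zero_sub,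
            norm_neg, hξ_norm]
      _ ≤ ‖(u - 1) (ξ i)‖ := by
          simpa using (p i).le_of_opNorm_le ((hp i).norm_le _) ((u - 1) (ξ i))
  obtain ⟨n, hn⟩ := ((hu.tendsto_apply_orthonormal hv).norm.eventually
    (eventually_lt_nhds (by simp : ‖(0 : H)‖ < 1))).exists
  exact (hlarge n).not_gt hn

end Hilbert

theorem conjugating_unitary_permutes_blocks_general
    {H : Type*} [NormedAddCommGroup H] [InnerProductSpace ℂ H] [CompleteSpace H]
    {I : Type*}
    (p : I → H →L[ℂ] H)
    (hpsa : ∀ i, IsSelfAdjoint (p i)) (hpidem : ∀ i, p i * p i = p i)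
    (hporth : ∀ i j, i ≠ j → p i * p j = 0) (hpne : ∀ i, p i ≠ 0)
    (p0 : H →L[ℂ] H) (hp0sa : IsSelfAdjoint p0) (hp0idem : p0 * p0 = p0)
    (hp0fix : ∀ ξ : H, p0 ξ = ξ ↔ ∀ i, p i ξ = 0)
    (u : H →L[ℂ] H) (hu1 : star u * u = 1) (hu2 : u * star u = 1)
    (hucpt : IsCompactOperator ⇑(u - 1))
    (heq : ∀ x : H →L[ℂ] H, IsCompactOperator ⇑x →
      ∑' i, (u * p i * star u) * x * (u * p i * star u) = ∑' i, p i * x * p i) :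
    ∃ σ : I ≃ I, (∀ i, u * p i * star u = p (σ i)) ∧ u * p0 * star u = p0 ∧
      {i | σ i ≠ i}.Finite ∧
      ∀ i, σ i ≠ i →
        FiniteDimensional ℂ ↥(LinearMap.range (p i : H →ₗ[ℂ] H)) ∧
        Module.rank ℂ ↥(LinearMap.range (p i : H →ₗ[ℂ] H)) =
          Module.rank ℂ ↥(LinearMap.range (p (σ i) : H →ₗ[ℂ] H)) := by
  have hp (i : I) : IsStarProjection (p i) := ⟨hpidem i, hpsa i⟩
  have hp_orth : Pairwise fun i j ↦ p i * p j = 0 := fun i j ↦ hporth i j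
  have hu : u ∈ unitary (H →L[ℂ] H) := Unitary.mem_iff.mpr ⟨hu1, hu2⟩
  obtain ⟨σ, hσ⟩ := exists_equiv_unitary_conj_eq hp hp_orth hpne hu heq
  have hup (i : I) : p (σ i) * u = u * p i := by
    rw [← hσ i, mul_assoc, hu1, mul_one]
  have hpu (i : I) : p i * star u = star u * p (σ i) := by
    rw [← hσ i, ← mul_assoc, ← mul_assoc, hu1, one_mul]
  have hmoved {i : I} (hi : σ i ≠ i) : p i * u * p i = 0 := by
    rw [mul_assoc, ← hup, ← mul_assoc, hporth i (σ i) hi.symm, zero_mul]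
  refine ⟨σ, hσ, ?_, ?_, fun i hi ↦ ⟨?_, ?_⟩⟩
  · have h₁ := mul_mul_eq_mul_of_forall_exists_mul_eq hp0idem hp0fix fun i ↦
      ⟨σ.symm i, by simpa using hup (σ.symm i)⟩
    have h₂ := mul_mul_eq_mul_of_forall_exists_mul_eq hp0idem hp0fix fun i ↦ ⟨σ i, hpu i⟩
    rw [← (hp0sa.commute_of_mul_mul_eq h₁ h₂).eq, mul_assoc, hu2, mul_one]
  · exact (finite_setOf_mul_mul_eq_zero hp hp_orth hpne hucpt).subset fun i hi ↦ hmoved hi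
  · exact (hp i).isIdempotentElem.finiteDimensional_range_of_isCompactOperator
      ((hp i).isIdempotentElem.isCompactOperator_of_mul_mul_eq_zero hucpt (hmoved hi))
  · rw [← hσ i, rank_range_unitary_conj hu]

/-- If a unitary `u` with `u - 1` compact satisfies
`∑ (u p_i u*) x (u p_i u*) = ∑ p_i x p_i` for every compact `x`, then there is a bijection `σ`
of the index set with `u p_i u* = p_{σ(i)}`, `u p₀ u* = p₀`, `σ(i) = i` for all but finitely
many `i`, and whenever `σ(i) ≠ i` the projection `p i` has finite rank equal to the rank of
`pature (σ i)`. -/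
theorem conjugating_unitary_permutes_blocks
    {H : Type*} [NormedAddCommGroup H] [InnerProductSpace ℂ H] [CompleteSpace H]
    [TopologicalSpace.SeparableSpace H]
    (hinf : ¬ FiniteDimensional ℂ H)
    {I : Type*} [Countable I]
    (p : I → H →L[ℂ] H)
    (hpsa : ∀ i, IsSelfAdjoint (p i)) (hpidem : ∀ i, p i * p i = p i)
    (hporth : ∀ i j, i ≠ j → p i * p j = 0) (hpne : ∀ i, p i ≠ 0)
    (p0 : H →L[ℂ] H) (hp0sa : IsSelfAdjoint p0) (hp0idem : p0 * p0 = p0)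
    (hp0fix : ∀ ξ : H, p0 ξ = ξ ↔ ∀ i, p i ξ = 0)
    (u : H →L[ℂ] H) (hu1 : star u * u = 1) (hu2 : u * star u = 1)
    (hucpt : IsCompactOperator ⇑(u - 1))
    (heq : ∀ x : H →L[ℂ] H, IsCompactOperator ⇑x →
      ∑' i, (u * p i * star u) * x * (u * p i * star u) = ∑' i, p i * x * p i) :
    ∃ σ : I ≃ I, (∀ i, u * p i * star u = p (σ i)) ∧ u * p0 * star u = p0 ∧
      {i | σ i ≠ i}.Finite ∧
      ∀ i, σ i ≠ i →
        FiniteDimensional ℂ ↥(LinearMap.range (p i : H →ₗ[ℂ] H)) ∧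
        Module.rank ℂ ↥(LinearMap.range (p i : H →ₗ[ℂ] H)) =
          Module.rank ℂ ↥(LinearMap.range (p (σ i) : H →ₗ[ℂ] H)) :=
  conjugating_unitary_permutes_blocks_general p hpsa hpidem hporth hpne p0 hp0sa hp0idem hp0fix u
    hu1 hu2 hucpt heq
end

section
/- Let a be a normal bounded operator on H (a a* = a* a), let λ ≠ μ be complex numbers, let p be the orthogonal projection onto ker(a − λ) and q the orthogonal projection onto ker(a − μ). Then for every bounded operator u on H: |λ − μ| · ‖q u p‖ ≤ ‖u a − a u‖. -/
/-!
Normality of `a` makes every `μ`-eigenvector of `a` a `conj μ`-eigenvector of `a⋆`; taking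
adjoints, `q a = μ q`, while `a p = λ p`. Sandwiching the commutator then gives
`q (u a - a u) p = (λ - μ) q u p`, and projections have norm at most one.
-/

open ContinuousLinearMap ComplexConjugate

lemma IsStarNormal.adjoint_apply_eq_conj_smul {𝕜 E : Type*} [RCLike 𝕜] [NormedAddCommGroup E]
    [InnerProductSpace 𝕜 E] [CompleteSpace E] {T : E →L[𝕜] E} (hT : IsStarNormal T)
    {μ : 𝕜} {x : E} (hx : T x = μ • x) : adjoint T x = conj μ • x := by
  have hshift : IsStarNormal (T - μ • 1) :=
    Commute.isStarNormal_sub <| by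
      simpa only [star_smul, star_one, starRingEnd_apply] using
        (Commute.one_right T).smul_right (conj μ)
  have := (hshift.adjoint_apply_eq_zero_iff x).mpr (by simp [hx])
  simpa [sub_eq_zero, ← star_eq_adjoint] using this

lemma ContinuousLinearMap.mul_eq_smul_of_forall_fixed {R M : Type*} [CommRing R]
    [TopologicalSpace M] [AddCommGroup M] [Module R M] [ContinuousConstSMul R M]
    {a p : M →L[R] M} (hp : IsIdempotentElem p) {μ : R} (h : ∀ x, p x = x → a x = μ • x) :
    a * p = μ • p := by
  ext x
  exact h (p x) congr($hp x)

lemma mul_commutator_mul_eq_smul {R A : Type*} [CommRing R] [Ring A] [Algebra R A]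
    {a p q u : A} {l m : R} (hap : a * p = l • p) (hqa : q * a = m • q) :
    q * (u * a - a * u) * p = (l - m) • (q * u * p) := by
  have hright : q * (u * a) * p = l • (q * u * p) := by
    rw [mul_assoc, mul_assoc u, hap, mul_smul_comm, mul_smul_comm, ← mul_assoc]
  have hleft : q * (a * u) * p = m • (q * u * p) := by
    rw [← mul_assoc, hqa, smul_mul_assoc, smul_mul_assoc]
  rw [mul_sub, sub_mul, hright, hleft, sub_smul]

lemma norm_smul_mul_mul_le_norm_commutator {𝕜 A : Type*} [NormedField 𝕜] [NormedRing A]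
    [StarRing A] [CStarRing A] [NormedAlgebra 𝕜 A] {a p q : A} {l m : 𝕜}
    (hp : IsStarProjection p) (hq : IsStarProjection q)
    (hap : a * p = l • p) (hqa : q * a = m • q) (u : A) :
    ‖l - m‖ * ‖q * u * p‖ ≤ ‖u * a - a * u‖ :=
  calc ‖l - m‖ * ‖q * u * p‖ = ‖q * (u * a - a * u) * p‖ := by
        rw [mul_commutator_mul_eq_smul hap hqa, norm_smul]
    _ ≤ ‖q‖ * ‖u * a - a * u‖ * ‖p‖ := norm_mul₃_le
    _ ≤ 1 * ‖u * a - a * u‖ * 1 := by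
        gcongr
        exacts [hq.norm_le, hp.norm_le]
    _ = ‖u * a - a * u‖ := by ring

theorem eigenprojection_commutator_estimate_general
    {H : Type*} [NormedAddCommGroup H] [InnerProductSpace ℂ H] [CompleteSpace H]
    (a : H →L[ℂ] H) (ha : a * star a = star a * a)
    (lam mu : ℂ)
    (p : H →L[ℂ] H) (hpsa : IsSelfAdjoint p) (hpidem : p * p = p)
    (hpfix : ∀ ξ : H, p ξ = ξ ↔ a ξ = lam • ξ)
    (q : H →L[ℂ] H) (hqsa : IsSelfAdjoint q) (hqidem : q * q = q)
    (hqfix : ∀ ξ : H, q ξ = ξ ↔ a ξ = mu • ξ) :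
    ∀ u : H →L[ℂ] H, ‖lam - mu‖ * ‖q * u * p‖ ≤ ‖u * a - a * u‖ := by
  have hap : a * p = lam • p := mul_eq_smul_of_forall_fixed hpidem fun ξ hξ => (hpfix ξ).mp hξ
  have hadj_q : star a * q = conj mu • q :=
    mul_eq_smul_of_forall_fixed hqidem fun ξ hξ => by
      rw [star_eq_adjoint]
      exact IsStarNormal.adjoint_apply_eq_conj_smul ⟨ha.symm⟩ ((hqfix ξ).mp hξ)
  have hqa : q * a = mu • q := by
    simpa [star_mul, hqsa.star_eq, star_smul] using congr(star $hadj_q)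
  exact norm_smul_mul_mul_le_norm_commutator ⟨hpidem, hpsa⟩ ⟨hqidem, hqsa⟩ hap hqa

/-- Let `a` be a normal bounded operator, `lam ≠ mu` complex numbers, `p` the
orthogonal projection onto `ker (a - lam)` and `q` the orthogonal projection onto
`ker (a - mu)`. Then for every bounded `u`: `|lam - mu| * ‖q u p‖ ≤ ‖u a - a u‖`. -/
theorem eigenprojection_commutator_estimate
    {H : Type*} [NormedAddCommGroup H] [InnerProductSpace ℂ H] [CompleteSpace H]
    [TopologicalSpace.SeparableSpace H]
    (hinf : ¬ FiniteDimensional ℂ H)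
    (a : H →L[ℂ] H) (ha : a * star a = star a * a)
    (lam mu : ℂ) (hlm : lam ≠ mu)
    (p : H →L[ℂ] H) (hpsa : IsSelfAdjoint p) (hpidem : p * p = p)
    (hpfix : ∀ ξ : H, p ξ = ξ ↔ a ξ = lam • ξ)
    (q : H →L[ℂ] H) (hqsa : IsSelfAdjoint q) (hqidem : q * q = q)
    (hqfix : ∀ ξ : H, q ξ = ξ ↔ a ξ = mu • ξ) :
    ∀ u : H →L[ℂ] H, ‖lam - mu‖ * ‖q * u * p‖ ≤ ‖u * a - a * u‖ :=
  eigenprojection_commutator_estimate_general a ha lam mu p hpsa hpidem hpfix q hqsa hqidem hqfix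
end

section
/- Let a be a normal compact operator on H of finite rank, with distinct nonzero eigenvalues λ_1, …, λ_w and p_i the orthogonal projection onto ker(a − λ_i), so that a = Σ_{i=1}^w λ_i p_i. Let P(y) = Σ_{i=1}^w p_i y p_i be the associated pinching. Then there exists a constant c > 0, depending only on a, such that for every unitary u on H and every compact operator y with ‖y‖ ≤ 1: ‖u·P(u*·y) − P(y)‖ ≤ c·‖u a u* − a‖. -/
open ContinuousLinearMap in
lemma aux_star_eigen {H : Type*} [NormedAddCommGroup H] [InnerProductSpace ℂ H] [CompleteSpace H]
    (a : H →L[ℂ] H) (han : a * star a = star a * a)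
    (lam : ℂ) (v : H) (hv : a v = lam • v) :
    (star a) v = (starRingEnd ℂ lam) • v := by
  set b : H →L[ℂ] H := a - lam • 1 with hb
  have hbv : b v = 0 := by
    simp [hb, ContinuousLinearMap.sub_apply, ContinuousLinearMap.smul_apply,
      ContinuousLinearMap.one_apply, hv]
  have hcomm : b * star b = star b * b := by
    simp only [hb, star_sub, star_smul, star_one, sub_mul, mul_sub, smul_mul_assoc,
      mul_smul_comm, one_mul, mul_one, han, smul_smul, smul_sub]
    rw [mul_comm lam]
    abel
  have h0 : @inner ℂ _ _ ((star b) v) ((star b) v) = 0 := by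
    rw [ContinuousLinearMap.star_eq_adjoint, ContinuousLinearMap.adjoint_inner_left]
    have : b ((ContinuousLinearMap.adjoint b) v) = (ContinuousLinearMap.adjoint b) (b v) := by
      have := congrArg (fun t => t v) hcomm
      simpa [ContinuousLinearMap.mul_apply, ContinuousLinearMap.star_eq_adjoint] using this
    rw [this, hbv, map_zero, inner_zero_right]
  have hz : (star b) v = 0 := by
    exact inner_self_eq_zero.mp h0
  have : star b = star a - (starRingEnd ℂ lam) • 1 := by
    simp [hb, star_sub, star_smul]
  rw [this] at hz
  have := hz
  simp only [ContinuousLinearMap.sub_apply, ContinuousLinearMap.smul_apply,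
    ContinuousLinearMap.one_apply, sub_eq_zero] at this
  exact this

lemma aux_orth {H : Type*} [NormedAddCommGroup H] [InnerProductSpace ℂ H] [CompleteSpace H]
    (a : H →L[ℂ] H) (han : a * star a = star a * a)
    (lm mu : ℂ) (hne : lm ≠ mu) (v w : H) (hv : a v = lm • v) (hw : a w = mu • w) :
    @inner ℂ _ _ v w = 0 := by
  have h1 : @inner ℂ _ _ v (a w) = mu * @inner ℂ _ _ v w := by
    rw [hw, inner_smul_right]
  have h2 : @inner ℂ _ _ v (a w) = lm * @inner ℂ _ _ v w := by
    rw [← ContinuousLinearMap.adjoint_inner_left, ← ContinuousLinearMap.star_eq_adjoint]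
    rw [aux_star_eigen a han lm v hv, inner_smul_left]
    simp
  have : (lm - mu) * @inner ℂ _ _ v w = 0 := by
    rw [sub_mul, ← h2, ← h1, sub_self]
  rcases mul_eq_zero.mp this with h | h
  · exact absurd (sub_eq_zero.mp h) hne
  · exact h

lemma aux_proj_orth {H : Type*} [NormedAddCommGroup H] [InnerProductSpace ℂ H] [CompleteSpace H]
    (a : H →L[ℂ] H) (han : a * star a = star a * a)
    {w : ℕ} (lam : Fin w → ℂ) (hlam_inj : Function.Injective lam)
    (p : Fin w → H →L[ℂ] H)
    (hpsa : ∀ i, IsSelfAdjoint (p i)) (hpidem : ∀ i, p i * p i = p i)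
    (hpfix : ∀ i, ∀ ξ : H, p i ξ = ξ ↔ a ξ = lam i • ξ)
    (i j : Fin w) (hij : i ≠ j) : p i * p j = 0 := by
  ext ξ
  set v : H := p j ξ with hvdef
  have hfixv : p j v = v := by
    have := congrArg (fun t => t ξ) (hpidem j); simpa [ContinuousLinearMap.mul_apply] using this
  have hv : a v = lam j • v := (hpfix j v).mp hfixv
  set z : H := p i v with hzdef
  have hfixz : p i z = z := by
    have := congrArg (fun t => t v) (hpidem i); simpa [ContinuousLinearMap.mul_apply] using this
  have hz : a z = lam i • z := (hpfix i z).mp hfixz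
  have hadj : ContinuousLinearMap.adjoint (p i) = p i := by
    rw [← ContinuousLinearMap.star_eq_adjoint]; exact hpsa i
  have h0 : @inner ℂ _ _ z z = 0 := by
    have h1 : @inner ℂ _ _ z z = @inner ℂ _ _ v z := by
      calc @inner ℂ _ _ z z = @inner ℂ _ _ ((ContinuousLinearMap.adjoint (p i)) v) z := by
            rw [hadj]
        _ = @inner ℂ _ _ v (p i z) := ContinuousLinearMap.adjoint_inner_left _ _ _
        _ = @inner ℂ _ _ v z := by rw [hfixz]
    rw [h1]
    exact aux_orth a han (lam j) (lam i) (fun h => hij (hlam_inj h).symm) v z hv hz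
  have : z = 0 := inner_self_eq_zero.mp h0
  simpa [ContinuousLinearMap.mul_apply, ContinuousLinearMap.zero_apply, hzdef, hvdef] using this

lemma aux_pow_norm {R : Type*} [NormedRing R] (x y : R) (M : ℝ)
    (hx : ‖x‖ ≤ M) (hy : ‖y‖ ≤ M) :
    ∀ n : ℕ, ‖x ^ (n+1) - y ^ (n+1)‖ ≤ (n+1 : ℝ) * M ^ n * ‖x - y‖ := by
  have hM : 0 ≤ M := le_trans (norm_nonneg x) hx
  intro n
  induction n with
  | zero => simp
  | succ n ih =>
    have key : x ^ (n+2) - y ^ (n+2) = x ^ (n+1) * (x - y) + (x ^ (n+1) - y ^ (n+1)) * y := by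
      noncomm_ring
    rw [key]
    have h1 : ‖x ^ (n+1) * (x - y)‖ ≤ M ^ (n+1) * ‖x - y‖ := by
      calc ‖x ^ (n+1) * (x - y)‖ ≤ ‖x ^ (n+1)‖ * ‖x - y‖ := norm_mul_le _ _
        _ ≤ M ^ (n+1) * ‖x - y‖ := by
            apply mul_le_mul_of_nonneg_right _ (norm_nonneg _)
            calc ‖x ^ (n+1)‖ ≤ ‖x‖ ^ (n+1) := norm_pow_le' x (Nat.succ_pos n)
              _ ≤ M ^ (n+1) := pow_le_pow_left₀ (norm_nonneg x) hx (n+1)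
    have h2 : ‖(x ^ (n+1) - y ^ (n+1)) * y‖ ≤ ((n+1 : ℝ) * M ^ n * ‖x - y‖) * M := by
      calc ‖(x ^ (n+1) - y ^ (n+1)) * y‖ ≤ ‖x ^ (n+1) - y ^ (n+1)‖ * ‖y‖ := norm_mul_le _ _
        _ ≤ ((n+1 : ℝ) * M ^ n * ‖x - y‖) * M :=
            mul_le_mul ih hy (norm_nonneg _) (by positivity)
    calc ‖x ^ (n+1) * (x - y) + (x ^ (n+1) - y ^ (n+1)) * y‖
        ≤ ‖x ^ (n+1) * (x - y)‖ + ‖(x ^ (n+1) - y ^ (n+1)) * y‖ := norm_add_le _ _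
      _ ≤ M ^ (n+1) * ‖x - y‖ + ((n+1 : ℝ) * M ^ n * ‖x - y‖) * M := add_le_add h1 h2
      _ ≤ ((n:ℝ)+1+1) * M ^ (n+1) * ‖x - y‖ := by
          have : ((n+1 : ℝ) * M ^ n * ‖x - y‖) * M = (n+1 : ℝ) * M ^ (n+1) * ‖x - y‖ := by ring
          rw [this]; ring_nf; nlinarith [norm_nonneg (x - y), pow_nonneg hM (n+1)]
      _ = ((n+1 : ℕ)+1 : ℝ) * M ^ (n+1) * ‖x - y‖ := by push_cast; ring



/-- Let `a` be a normal compact operator of finite rank, with distinct nonzero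
eigenvalues `lam i` and eigenprojections `p i`, so that `a = ∑ i, lam i • p i`. Then there is a
constant `c > 0` such that for every unitary `u` and every compact `y` with `‖y‖ ≤ 1`,
`‖u * P (u* * y) - P y‖ ≤ c * ‖u a u* - a‖`, where `P y = ∑ i, p i * y * p i`. -/
theorem finite_rank_pinching_orbit_lipschitz
    {H : Type*} [NormedAddCommGroup H] [InnerProductSpace ℂ H] [CompleteSpace H]
    [TopologicalSpace.SeparableSpace H]
    (hinf : ¬ FiniteDimensional ℂ H)
    (a : H →L[ℂ] H) (hacpt : IsCompactOperator ⇑a) (hanormal : a * star a = star a * a)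
    (w : ℕ) (lam : Fin w → ℂ)
    (hlam_ne : ∀ i, lam i ≠ 0) (hlam_inj : Function.Injective lam)
    (p : Fin w → H →L[ℂ] H)
    (hpsa : ∀ i, IsSelfAdjoint (p i)) (hpidem : ∀ i, p i * p i = p i)
    (hpfix : ∀ i, ∀ ξ : H, p i ξ = ξ ↔ a ξ = lam i • ξ)
    (hdecomp : a = ∑ i, lam i • p i) :
    ∃ c > (0 : ℝ), ∀ u : H →L[ℂ] H, star u * u = 1 → u * star u = 1 →
      ∀ y : H →L[ℂ] H, IsCompactOperator ⇑y → ‖y‖ ≤ 1 →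
        ‖u * (∑ i, p i * (star u * y) * p i) - ∑ i, p i * y * p i‖
          ≤ c * ‖u * a * star u - a‖ := by
  classical
  have hporth : ∀ i j, i ≠ j → p i * p j = 0 :=
    aux_proj_orth a hanormal lam hlam_inj p hpsa hpidem hpfix
  -- powers of a
  have hpow : ∀ k : ℕ, a ^ (k+1) = ∑ j, (lam j ^ (k+1)) • p j := by
    intro k
    induction k with
    | zero => simpa using hdecomp
    | succ k ih =>
      rw [pow_succ, ih]
      nth_rewrite 1 [hdecomp]
      calc (∑ j, lam j ^ (k+1) • p j) * (∑ m, lam m • p m)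
          = ∑ j, ∑ m, (lam j ^ (k+1) * lam m) • (p j * p m) := by
            rw [Finset.sum_mul]
            refine Finset.sum_congr rfl fun j _ => ?_
            rw [Finset.mul_sum]
            refine Finset.sum_congr rfl fun m _ => ?_
            rw [smul_mul_smul_comm]
        _ = ∑ j, lam j ^ (k+1+1) • p j := by
            refine Finset.sum_congr rfl fun j _ => ?_
            rw [Finset.sum_eq_single j]
            · rw [hpidem j, ← pow_succ]
            · intro m _ hm
              rw [hporth j m (Ne.symm hm), smul_zero]
            · intro h; exact absurd (Finset.mem_univ j) h
  -- Vandermonde-type matrix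
  set V : Matrix (Fin w) (Fin w) ℂ := Matrix.of (fun j k : Fin w => lam j ^ ((k : ℕ)+1)) with hV
  have hdet : IsUnit V.det := by
    have hVd : V = Matrix.diagonal lam * Matrix.vandermonde lam := by
      ext j k
      simp [hV, Matrix.diagonal_mul, Matrix.vandermonde, pow_succ']
    rw [hVd, Matrix.det_mul, Matrix.det_diagonal, Matrix.det_vandermonde]
    rw [isUnit_iff_ne_zero]
    apply mul_ne_zero
    · exact Finset.prod_ne_zero_iff.mpr fun i _ => hlam_ne i
    · refine Finset.prod_ne_zero_iff.mpr fun i _ => ?_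
      refine Finset.prod_ne_zero_iff.mpr fun j hj => ?_
      rw [Finset.mem_Ioi] at hj
      exact sub_ne_zero.mpr fun h => hj.ne' (hlam_inj h)
  have hkey : ∀ i j : Fin w, (∑ k, V⁻¹ k i * lam j ^ ((k : ℕ)+1))
      = if j = i then 1 else 0 := by
    intro i j
    have h1 := Matrix.mul_nonsing_inv V hdet
    have h2 := congrFun (congrFun h1 j) i
    rw [Matrix.mul_apply] at h2
    rw [Matrix.one_apply] at h2
    rw [← h2]
    refine Finset.sum_congr rfl fun k _ => ?_
    rw [mul_comm]
    rfl
  -- representation of p i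
  have hrep : ∀ i, p i = ∑ k : Fin w, (V⁻¹ k i) • a ^ ((k : ℕ)+1) := by
    intro i
    symm
    calc ∑ k : Fin w, (V⁻¹ k i) • a ^ ((k : ℕ)+1)
        = ∑ k : Fin w, ∑ j, ((V⁻¹ k i) * lam j ^ ((k : ℕ)+1)) • p j := by
          refine Finset.sum_congr rfl fun k _ => ?_
          rw [hpow, Finset.smul_sum]
          exact Finset.sum_congr rfl fun j _ => (smul_smul _ _ _)
      _ = ∑ j, (∑ k : Fin w, (V⁻¹ k i) * lam j ^ ((k : ℕ)+1)) • p j := by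
          rw [Finset.sum_comm]
          exact Finset.sum_congr rfl fun j _ => (Finset.sum_smul).symm
      _ = p i := by
          simp only [hkey]
          simp
  -- constants
  set M : ℝ := ‖a‖ with hM
  set L : Fin w → ℝ := fun i => ∑ k : Fin w, ‖V⁻¹ k i‖ * (((k : ℕ) : ℝ)+1) * M ^ (k : ℕ)
    with hL
  have hLnn : ∀ i, 0 ≤ L i := by
    intro i
    apply Finset.sum_nonneg
    intro k _
    have : (0:ℝ) ≤ M := norm_nonneg a
    positivity
  refine ⟨1 + ∑ i, L i * ‖p i‖, by
    have : (0:ℝ) ≤ ∑ i, L i * ‖p i‖ :=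
      Finset.sum_nonneg fun i _ => mul_nonneg (hLnn i) (norm_nonneg _)
    linarith, ?_⟩
  intro u hu1 hu2 y hycpt hy
  set b : H →L[ℂ] H := u * a * star u with hb
  -- norm of u
  have hu_norm : ‖u‖ ≤ 1 := by
    have h1 : ‖star u * u‖ = ‖u‖ * ‖u‖ := CStarRing.norm_star_mul_self
    rw [hu1] at h1
    have h2 : ‖(1 : H →L[ℂ] H)‖ ≤ 1 := ContinuousLinearMap.norm_id_le
    nlinarith [norm_nonneg u]
  have hustar_norm : ‖star u‖ ≤ 1 := by rw [norm_star]; exact hu_norm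
  have hbnorm : ‖b‖ ≤ M := by
    calc ‖u * a * star u‖ ≤ ‖u * a‖ * ‖star u‖ := norm_mul_le _ _
      _ ≤ (‖u‖ * ‖a‖) * ‖star u‖ :=
          mul_le_mul_of_nonneg_right (norm_mul_le _ _) (norm_nonneg _)
      _ ≤ (1 * M) * 1 := by
          apply mul_le_mul _ hustar_norm (norm_nonneg _) (by positivity)
          exact mul_le_mul hu_norm le_rfl (norm_nonneg a) zero_le_one
      _ = M := by ring
  -- conjugated powers
  have hua : ∀ k : ℕ, u * a ^ (k+1) * star u = b ^ (k+1) := by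
    intro k
    induction k with
    | zero => simp [hb]
    | succ k ih =>
      rw [pow_succ b, ← ih, hb]
      calc u * a ^ (k+1+1) * star u = (u * a ^ (k+1)) * ((star u * u) * (a * star u)) := by
            rw [hu1]; noncomm_ring
        _ = u * a ^ (k + 1) * star u * (u * a * star u) := by noncomm_ring
  have hup : ∀ i, u * p i * star u - p i
      = ∑ k : Fin w, (V⁻¹ k i) • (b ^ ((k : ℕ)+1) - a ^ ((k : ℕ)+1)) := by
    intro i
    rw [hrep i]
    rw [Finset.mul_sum, Finset.sum_mul, ← Finset.sum_sub_distrib]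
    refine Finset.sum_congr rfl fun k _ => ?_
    rw [smul_sub, mul_smul_comm, smul_mul_assoc, hua]
  -- the key estimate
  have hest : ∀ i, ‖u * p i * star u - p i‖ ≤ L i * ‖b - a‖ := by
    intro i
    rw [hup i, hL]
    calc ‖∑ k : Fin w, (V⁻¹ k i) • (b ^ ((k : ℕ)+1) - a ^ ((k : ℕ)+1))‖
        ≤ ∑ k : Fin w, ‖(V⁻¹ k i) • (b ^ ((k : ℕ)+1) - a ^ ((k : ℕ)+1))‖ :=
          norm_sum_le _ _
      _ ≤ ∑ k : Fin w, ‖V⁻¹ k i‖ * ((((k : ℕ) : ℝ)+1) * M ^ (k : ℕ) * ‖b - a‖) := by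
          refine Finset.sum_le_sum fun k _ => ?_
          rw [norm_smul]
          exact mul_le_mul_of_nonneg_left
            (aux_pow_norm b a M hbnorm le_rfl (k : ℕ)) (norm_nonneg _)
      _ = (∑ k : Fin w, ‖V⁻¹ k i‖ * (((k : ℕ) : ℝ)+1) * M ^ (k : ℕ)) * ‖b - a‖ := by
          rw [Finset.sum_mul]
          exact Finset.sum_congr rfl fun k _ => by ring
  -- assemble
  have hsplit : u * (∑ i, p i * (star u * y) * p i) - ∑ i, p i * y * p i
      = ∑ i, (u * p i * star u - p i) * (y * p i) := by
    rw [Finset.mul_sum, ← Finset.sum_sub_distrib]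
    refine Finset.sum_congr rfl fun i _ => ?_
    noncomm_ring
  rw [hsplit]
  calc ‖∑ i, (u * p i * star u - p i) * (y * p i)‖
      ≤ ∑ i, ‖(u * p i * star u - p i) * (y * p i)‖ := norm_sum_le _ _
    _ ≤ ∑ i, (L i * ‖b - a‖) * ‖p i‖ := by
        refine Finset.sum_le_sum fun i _ => ?_
        calc ‖(u * p i * star u - p i) * (y * p i)‖
            ≤ ‖u * p i * star u - p i‖ * ‖y * p i‖ := norm_mul_le _ _
          _ ≤ (L i * ‖b - a‖) * ‖p i‖ := by
              apply mul_le_mul (hest i) _ (norm_nonneg _)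
                (mul_nonneg (hLnn i) (norm_nonneg _))
              calc ‖y * p i‖ ≤ ‖y‖ * ‖p i‖ := norm_mul_le _ _
                _ ≤ 1 * ‖p i‖ := mul_le_mul_of_nonneg_right hy (norm_nonneg _)
                _ = ‖p i‖ := one_mul _
    _ = (∑ i, L i * ‖p i‖) * ‖b - a‖ := by
        rw [Finset.sum_mul]
        exact Finset.sum_congr rfl fun i _ => by ring
    _ ≤ (1 + ∑ i, L i * ‖p i‖) * ‖b - a‖ := by
        apply mul_le_mul_of_nonneg_right _ (norm_nonneg _)
        linarith
end

section
/- Let u be a unitary operator on H with u − 1 compact, and set q_i := u p_i u* for all i ≥ 0 (including q_0 = u p_0 u*). Then: (a) for every ξ ∈ H the series Σ_{i≥0} q_i p_i ξ converges in H, defining a bounded operator s with s ξ = Σ_{i≥0} q_i p_i ξ; (b) s − 1 is compact; (c) s p_i = q_i s for every i ≥ 0; and (d) if C ≥ 0 satisfies ‖u·P(u*·y) − P(y)‖ ≤ C for every compact y with ‖y‖ ≤ 1, then ‖s − 1‖ ≤ 3C. -/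
/-- The family `{p_i}_{i ≥ 0}` obtained by adjoining the complementary projection `p₀`. -/
def extFam {H : Type*} [NormedAddCommGroup H] [InnerProductSpace ℂ H]
    (p0 : H →L[ℂ] H) (p : ℕ → H →L[ℂ] H) : ℕ → H →L[ℂ] H
  | 0 => p0
  | n + 1 => p n

/-!
Write `P` for the family `p₀, p₁, …`, `q i = u P i u*`, and `s := u (1 + K)` with
`K := ∑ P i (u* - 1) P i`, so that `s ξ = ∑ q i (P i ξ)` because `∑ P i ξ = ξ`. Since `P i → 0`
strongly and `u* - 1` is compact, `‖P i (u* - 1)‖ → 0`; a block-diagonal sum has norm at most its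
largest block, so the series for `K` converges in norm and `K` is compact. The relation
`s P i = q i s` follows from `K P i = P i K = P i (u* - 1) P i`.

For the norm bound, test the hypothesis on the projection `y` onto the span of finitely many
components `p i ξ`: then `(u P(u* y) - P(y)) ξ = ∑ (q i - 1) p i ξ`. The remaining term
`q₀ p₀ ξ - p₀ ξ` has norm `‖β‖` for `β := (1 - p₀) u* p₀ ξ`; testing on `u y`, with `y` the
projection onto the span of finitely many components of `β`, gives
`‖β‖² = |⟪p₀ ξ, u β⟫| ≤ C ‖p₀ ξ‖ ‖β‖`. Hence `‖s - 1‖ ≤ 2C`.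
-/

open Filter Topology
open scoped InnerProductSpace

theorem tendsto_norm_comp_of_isCompactOperator {𝕜 E F G ι : Type*} [RCLike 𝕜]
    [NormedAddCommGroup E] [NormedSpace 𝕜 E] [NormedAddCommGroup F] [NormedSpace 𝕜 F]
    [NormedAddCommGroup G] [NormedSpace 𝕜 G] {l : Filter ι} {T : ι → F →L[𝕜] G} {M : NNReal}
    (hT : ∀ i, ‖T i‖₊ ≤ M) (hT0 : ∀ v, Tendsto (fun i => T i v) l (𝓝 0))
    {c : E →L[𝕜] F} (hc : IsCompactOperator c) :
    Tendsto (fun i => ‖(T i).comp c‖) l (𝓝 0) := by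
  set K := closure (c '' Metric.closedBall 0 1)
  have : CompactSpace K := isCompact_iff_compactSpace.1 (hc.isCompact_closure_image_closedBall 1)
  -- a bounded family converging pointwise converges uniformly on the compact set `K`
  have hequi : Equicontinuous fun i (x : K) => T i x :=
    (LipschitzWith.uniformEquicontinuous _ (M * 1) fun i =>
      ((T i).lipschitz.weaken (hT i)).comp (LipschitzWith.subtype_val K)).equicontinuous
  have hunif := Metric.tendstoUniformly_iff.1 <| UniformFun.tendsto_iff_tendstoUniformly.1 <|
    (hequi.tendsto_uniformFun_iff_pi l 0).2 (tendsto_pi_nhds.2 fun x => hT0 x)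
  rw [Metric.tendsto_nhds]
  intro ε hε
  filter_upwards [hunif (ε / 2) (half_pos hε)] with i hi
  rw [dist_zero_right, norm_norm]
  refine (half_lt_self hε).trans_le' <|
    ContinuousLinearMap.opNorm_le_of_unit_norm (half_pos hε).le fun v hv => ?_
  have hv : c v ∈ K := subset_closure ⟨v, by simp [hv], rfl⟩
  simpa using (hi ⟨c v, hv⟩).le

theorem IsIdempotentElem.apply_apply {R M : Type*} [Semiring R] [TopologicalSpace M]
    [AddCommMonoid M] [Module R M] {p : M →L[R] M} (hp : IsIdempotentElem p) (x : M) :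
    p (p x) = p x :=
  congrArg (· x) hp.eq

theorem IsSelfAdjoint.inner_apply_left {𝕜 E : Type*} [RCLike 𝕜] [NormedAddCommGroup E]
    [InnerProductSpace 𝕜 E] [CompleteSpace E] {T : E →L[𝕜] E} (hT : IsSelfAdjoint T)
    (x y : E) : ⟪T x, y⟫_𝕜 = ⟪x, T y⟫_𝕜 :=
  hT.isSymmetric x y

structure IsOrthogonalProjectionFamily {ι A : Type*} [Mul A] [Star A] [Zero A] (p : ι → A) :
    Prop where
  isStarProjection : ∀ i, IsStarProjection (p i)
  mul_eq_zero : Pairwise fun i j => p i * p j = 0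

namespace IsOrthogonalProjectionFamily

section StarRing

variable {ι A : Type*} [Semiring A] [StarRing A] {p : ι → A}
  (hp : IsOrthogonalProjectionFamily p)
include hp

theorem isStarProjection_sum (s : Finset ι) : IsStarProjection (∑ i ∈ s, p i) := by
  classical
  induction s using Finset.induction_on with
  | empty => simp [IsStarProjection.zero]
  | insert a s ha ih =>
    rw [Finset.sum_insert ha]
    refine (hp.isStarProjection a).add ih ?_
    rw [Finset.mul_sum]
    exact Finset.sum_eq_zero fun i hi => hp.mul_eq_zero (ne_of_mem_of_not_mem hi ha).symm

end StarRing

variable {ι 𝕜 E : Type*} [RCLike 𝕜] [NormedAddCommGroup E] [InnerProductSpace 𝕜 E]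
  [CompleteSpace E] {p : ι → E →L[𝕜] E} (hp : IsOrthogonalProjectionFamily p)
include hp

theorem inner_apply_apply {i j : ι} (hij : i ≠ j) (x y : E) : ⟪p i x, p j y⟫_𝕜 = 0 := by
  rw [(hp.isStarProjection i).isSelfAdjoint.inner_apply_left, ← mul_apply_eq_comp,
    hp.mul_eq_zero hij, zero_apply, inner_zero_right]

theorem inner_apply_eq_zero {ζ : E} (hζ : ∀ i, p i ζ = 0) (i : ι) (w : E) :
    ⟪ζ, p i w⟫_𝕜 = 0 := by
  rw [← (hp.isStarProjection i).isSelfAdjoint.inner_apply_left, hζ, inner_zero_left]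

theorem norm_sum_apply_le (s : Finset ι) (ξ : E) : ‖∑ i ∈ s, p i ξ‖ ≤ ‖ξ‖ := by
  rw [← sum_apply]
  exact (ContinuousLinearMap.le_opNorm _ _).trans <|
    mul_le_of_le_one_left (norm_nonneg ξ) ((hp.isStarProjection_sum s).norm_le _)

theorem norm_sum_apply_sq (s : Finset ι) (x : ι → E) :
    ‖∑ i ∈ s, p i (x i)‖ ^ 2 = ∑ i ∈ s, ‖p i (x i)‖ ^ 2 := by
  classical
  induction s using Finset.induction_on with
  | empty => simp
  | insert a s ha ih =>
    have horth : ⟪p a (x a), ∑ i ∈ s, p i (x i)⟫_𝕜 = 0 := by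
      rw [inner_sum]
      exact Finset.sum_eq_zero fun i hi =>
        hp.inner_apply_apply (ne_of_mem_of_not_mem hi ha).symm _ _
    rw [Finset.sum_insert ha, Finset.sum_insert ha, ← ih, sq, sq, sq,
      norm_add_sq_eq_norm_sq_add_norm_sq_of_inner_eq_zero _ _ horth]

theorem sum_norm_apply_sq_le (s : Finset ι) (ξ : E) : ∑ i ∈ s, ‖p i ξ‖ ^ 2 ≤ ‖ξ‖ ^ 2 := by
  rw [← hp.norm_sum_apply_sq s fun _ => ξ]
  gcongr
  exact hp.norm_sum_apply_le s ξ

theorem summable_apply (ξ : E) : Summable fun i => p i ξ := by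
  have hsq : Summable fun i => ‖p i ξ‖ ^ 2 :=
    summable_of_sum_le (fun _ => sq_nonneg _) (hp.sum_norm_apply_sq_le · ξ)
  rw [summable_iff_vanishing_norm]
  intro ε hε
  obtain ⟨s, hs⟩ := summable_iff_vanishing_norm.1 hsq (ε ^ 2) (by positivity)
  refine ⟨s, fun t ht => ?_⟩
  have h := hs t ht
  rw [Real.norm_of_nonneg (Finset.sum_nonneg fun _ _ => sq_nonneg _),
    ← hp.norm_sum_apply_sq t fun _ => ξ] at h
  exact (pow_lt_pow_iff_left₀ (norm_nonneg _) hε.le two_ne_zero).1 h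

theorem apply_apply_self (i : ι) (ξ : E) : p i (p i ξ) = p i ξ :=
  (hp.isStarProjection i).isIdempotentElem.apply_apply ξ

theorem apply_apply_of_ne {i j : ι} (hij : i ≠ j) (ξ : E) : p i (p j ξ) = 0 :=
  congrArg (· ξ) (hp.mul_eq_zero hij)

theorem hasSum_apply_of_forall_apply_eq_zero (hcomplete : ∀ ξ, (∀ i, p i ξ = 0) → ξ = 0)
    (ξ : E) : HasSum (fun i => p i ξ) ξ := by
  obtain ⟨η, hη⟩ := hp.summable_apply ξ
  have hcomponent (k : ι) : p k η = p k ξ := by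
    rw [← hp.apply_apply_self k ξ]
    exact (hη.mapL (p k)).unique <|
      hasSum_single k fun j hj => hp.apply_apply_of_ne (Ne.symm hj) ξ
  have : ξ - η = 0 := hcomplete _ fun k => by rw [map_sub, hcomponent, sub_self]
  rwa [← sub_eq_zero.1 this] at hη

theorem norm_sum_mul_mul_le {s : Finset ι} {x : E →L[𝕜] E} {ε : ℝ} (hε : 0 ≤ ε)
    (hx : ∀ i ∈ s, ‖p i * x‖ ≤ ε) : ‖∑ i ∈ s, p i * x * p i‖ ≤ ε := by
  refine ContinuousLinearMap.opNorm_le_bound _ hε fun ξ => ?_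
  have hblock (i) (hi : i ∈ s) : ‖p i (x (p i ξ))‖ ^ 2 ≤ ε ^ 2 * ‖p i ξ‖ ^ 2 := by
    rw [← mul_pow]
    gcongr
    exact ((p i * x).le_opNorm (p i ξ)).trans (by gcongr; exact hx i hi)
  have hsq : ‖(∑ i ∈ s, p i * x * p i) ξ‖ ^ 2 ≤ (ε * ‖ξ‖) ^ 2 :=
    calc ‖(∑ i ∈ s, p i * x * p i) ξ‖ ^ 2 = ∑ i ∈ s, ‖p i (x (p i ξ))‖ ^ 2 := by
          rw [sum_apply]; exact hp.norm_sum_apply_sq s _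
      _ ≤ ∑ i ∈ s, ε ^ 2 * ‖p i ξ‖ ^ 2 := Finset.sum_le_sum hblock
      _ ≤ (ε * ‖ξ‖) ^ 2 := by
          rw [← Finset.mul_sum, mul_pow]; gcongr; exact hp.sum_norm_apply_sq_le s ξ
  exact (pow_le_pow_iff_left₀ (norm_nonneg _) (by positivity) two_ne_zero).1 hsq

theorem summable_mul_mul_of_isCompactOperator {x : E →L[𝕜] E} (hx : IsCompactOperator x) :
    Summable fun i => p i * x * p i := by
  have htail : Tendsto (fun i => ‖p i * x‖) cofinite (𝓝 0) :=
    tendsto_norm_comp_of_isCompactOperator (M := 1) (fun i => (hp.isStarProjection i).norm_le _)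
      (fun v => (hp.summable_apply v).tendsto_cofinite_zero) hx
  rw [summable_iff_vanishing_norm]
  intro ε hε
  have hsmall := htail.eventually (ge_mem_nhds (half_pos hε))
  refine ⟨(eventually_cofinite.1 hsmall).toFinset, fun t ht => ?_⟩
  refine (hp.norm_sum_mul_mul_le (half_pos hε).le fun i hi => ?_).trans_lt (half_lt_self hε)
  by_contra h
  exact Finset.disjoint_left.1 ht hi (by simpa using h)

end IsOrthogonalProjectionFamily

section Pinch

variable {H : Type*} [NormedAddCommGroup H] [InnerProductSpace ℂ H] [CompleteSpace H]
  {p : ℕ → H →L[ℂ] H}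

theorem IsOrthogonalProjectionFamily.isCompactOperator_pinch
    (hp : IsOrthogonalProjectionFamily p) {x : H →L[ℂ] H} (hx : IsCompactOperator x) :
    IsCompactOperator (pinch p x) :=
  isCompactOperator_of_tendsto (hp.summable_mul_mul_of_isCompactOperator hx).hasSum <|
    Eventually.of_forall fun _ => Submodule.sum_mem (compactOperator _ H H) fun i _ =>
      (hx.comp_clm (p i)).clm_comp (p i)

theorem IsOrthogonalProjectionFamily.pinch_mul (hp : IsOrthogonalProjectionFamily p)
    {x : H →L[ℂ] H} (hx : Summable fun i => p i * x * p i) (i : ℕ) :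
    pinch p x * p i = p i * x * p i := by
  rw [pinch, ← hx.tsum_mul_right, tsum_eq_single i fun j hj => by
    rw [mul_assoc, hp.mul_eq_zero hj, mul_zero], mul_assoc,
    (hp.isStarProjection i).isIdempotentElem.eq]

theorem IsOrthogonalProjectionFamily.mul_pinch (hp : IsOrthogonalProjectionFamily p)
    {x : H →L[ℂ] H} (hx : Summable fun i => p i * x * p i) (i : ℕ) :
    p i * pinch p x = p i * x * p i := by
  rw [pinch, ← hx.tsum_mul_left, tsum_eq_single i fun j hj => by
    rw [← mul_assoc, ← mul_assoc, hp.mul_eq_zero (Ne.symm hj), zero_mul, zero_mul],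
    ← mul_assoc, ← mul_assoc, (hp.isStarProjection i).isIdempotentElem.eq]

end Pinch

theorem isCompactOperator_star_sub_one {H : Type*} [NormedAddCommGroup H]
    [InnerProductSpace ℂ H] [CompleteSpace H] {u : H →L[ℂ] H} (hu1 : star u * u = 1)
    (hu : IsCompactOperator ⇑(u - 1)) : IsCompactOperator ⇑(star u - 1) := by
  have : star u - 1 = -(star u * (u - 1)) := by rw [mul_sub, hu1, mul_one, neg_sub]
  rw [this]
  exact (hu.clm_comp (star u)).neg

section SectionOperator

variable {H : Type*} [NormedAddCommGroup H] [InnerProductSpace ℂ H] [CompleteSpace H]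
  {P : ℕ → H →L[ℂ] H} {u : H →L[ℂ] H}

noncomputable def sectionOp (P : ℕ → H →L[ℂ] H) (u : H →L[ℂ] H) : H →L[ℂ] H :=
  u * (1 + pinch P (star u - 1))

theorem hasSum_sectionOp_apply (hP : IsOrthogonalProjectionFamily P)
    (hPsum : ∀ ξ, HasSum (fun i => P i ξ) ξ) (hs : Summable fun i => P i * (star u - 1) * P i)
    (ξ : H) : HasSum (fun i => (u * P i * star u) (P i ξ)) (sectionOp P u ξ) := by
  convert ((hPsum ξ).add (hs.hasSum.mapL (ContinuousLinearMap.apply ℂ H ξ))).mapL u using 1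
  · ext i
    simp [sub_apply, hP.apply_apply_self]
  · simp [sectionOp, pinch]

theorem IsOrthogonalProjectionFamily.isCompactOperator_sectionOp_sub_one
    (hP : IsOrthogonalProjectionFamily P) (hu1 : star u * u = 1)
    (hu : IsCompactOperator ⇑(u - 1)) : IsCompactOperator ⇑(sectionOp P u - 1) := by
  have : sectionOp P u - 1 = (u - 1) + u * pinch P (star u - 1) := by
    rw [sectionOp]; noncomm_ring
  rw [this]
  exact hu.add ((hP.isCompactOperator_pinch (isCompactOperator_star_sub_one hu1 hu)).clm_comp u)

theorem IsOrthogonalProjectionFamily.sectionOp_mul (hP : IsOrthogonalProjectionFamily P)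
    (hu1 : star u * u = 1) (hs : Summable fun i => P i * (star u - 1) * P i) (i : ℕ) :
    sectionOp P u * P i = u * P i * star u * sectionOp P u := by
  calc sectionOp P u * P i = u * (P i + P i * (star u - 1) * P i) := by
        rw [sectionOp, mul_assoc, add_mul, one_mul, hP.pinch_mul hs]
    _ = u * P i * (star u * u) * (1 + pinch P (star u - 1)) := by
        rw [hu1, mul_one, mul_add, mul_add, mul_one, mul_assoc u (P i) (pinch P _),
          hP.mul_pinch hs]
    _ = u * P i * star u * sectionOp P u := by rw [sectionOp]; noncomm_ring

end SectionOperator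

section ComponentProjection

variable {ι 𝕜 E : Type*} [RCLike 𝕜] [NormedAddCommGroup E] [InnerProductSpace 𝕜 E]
  {p : ι → E →L[𝕜] E}

/-- The orthogonal projection onto the span of the components `p j ξ`, `j ∈ s`. -/
noncomputable def componentProj (p : ι → E →L[𝕜] E) (s : Finset ι) (ξ : E) : E →L[𝕜] E :=
  ∑ j ∈ s, (𝕜 ∙ p j ξ).starProjection

theorem isCompactOperator_componentProj (s : Finset ι) (ξ : E) :
    IsCompactOperator (componentProj p s ξ) :=
  Submodule.sum_mem (compactOperator _ E E) fun j _ =>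
    (isCompactOperator_of_locallyCompactSpace_dom
      (𝕜 ∙ p j ξ).orthogonalProjectionOnto).clm_comp (𝕜 ∙ p j ξ).subtypeL

namespace IsOrthogonalProjectionFamily

variable [CompleteSpace E] (hp : IsOrthogonalProjectionFamily p)
include hp

theorem starProjection_span_apply_of_ne {i j : ι} (hij : i ≠ j) (ξ η : E) :
    (𝕜 ∙ p j ξ).starProjection (p i η) = 0 := by
  rw [Submodule.starProjection_singleton, hp.inner_apply_apply (Ne.symm hij), zero_div,
    zero_smul]

theorem norm_componentProj_le (s : Finset ι) (ξ : E) : ‖componentProj p s ξ‖ ≤ 1 := by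
  have hlines : IsOrthogonalProjectionFamily fun j => (𝕜 ∙ p j ξ).starProjection :=
    ⟨fun _ => isStarProjection_starProjection, fun i j hij =>
      (Submodule.isOrtho_span.2 fun _ hx _ hy => by
        rw [hx, hy]; exact hp.inner_apply_apply hij ξ ξ).starProjection_comp_starProjection⟩
  exact (hlines.isStarProjection_sum s).norm_le _

theorem componentProj_apply_of_notMem {s : Finset ι} {i : ι} (hi : i ∉ s) (ξ η : E) :
    componentProj p s ξ (p i η) = 0 := by
  rw [componentProj, sum_apply]
  exact Finset.sum_eq_zero fun j hj =>
    hp.starProjection_span_apply_of_ne (ne_of_mem_of_not_mem hj hi).symm ξ η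

theorem componentProj_apply_self {s : Finset ι} {i : ι} (hi : i ∈ s) (ξ : E) :
    componentProj p s ξ (p i ξ) = p i ξ := by
  rw [componentProj, sum_apply, Finset.sum_eq_single i
    (fun j _ hji => hp.starProjection_span_apply_of_ne (Ne.symm hji) ξ ξ) (absurd hi)]
  exact Submodule.starProjection_eq_self_iff.2 (Submodule.mem_span_singleton_self _)

end IsOrthogonalProjectionFamily

end ComponentProjection

namespace IsOrthogonalProjectionFamily

variable {H : Type*} [NormedAddCommGroup H] [InnerProductSpace ℂ H] [CompleteSpace H]
  {p : ℕ → H →L[ℂ] H} (hp : IsOrthogonalProjectionFamily p)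
include hp

theorem pinch_mul_componentProj_apply (x : H →L[ℂ] H) (s : Finset ℕ) (ξ : H) :
    pinch p (x * componentProj p s ξ) ξ = ∑ i ∈ s, p i (x (p i ξ)) := by
  have hvanish (i) (hi : i ∉ s) : p i * (x * componentProj p s ξ) * p i = 0 := by
    ext η; simp [hp.componentProj_apply_of_notMem hi]
  rw [pinch, tsum_eq_sum hvanish, sum_apply]
  exact Finset.sum_congr rfl fun i hi => by simp [hp.componentProj_apply_self hi]

variable {u : H →L[ℂ] H} {C : ℝ}
  (hbound : ∀ y : H →L[ℂ] H, IsCompactOperator ⇑y → ‖y‖ ≤ 1 →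
    ‖u * pinch p (star u * y) - pinch p y‖ ≤ C)
include hbound

theorem norm_sum_conj_apply_sub_le (s : Finset ℕ) (ξ : H) :
    ‖∑ i ∈ s, (u (p i (star u (p i ξ))) - p i ξ)‖ ≤ C * ‖ξ‖ := by
  set T := componentProj p s ξ
  have hT : (u * pinch p (star u * T) - pinch p T) ξ =
      ∑ i ∈ s, (u (p i (star u (p i ξ))) - p i ξ) := by
    rw [sub_apply, mul_apply_eq_comp, hp.pinch_mul_componentProj_apply, ← one_mul T,
      hp.pinch_mul_componentProj_apply, map_sum, ← Finset.sum_sub_distrib]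
    simp [hp.apply_apply_self]
  rw [← hT]
  exact ((u * pinch p (star u * T) - pinch p T).le_opNorm ξ).trans <| by
    gcongr; exact hbound T (isCompactOperator_componentProj s ξ) (hp.norm_componentProj_le s ξ)

theorem norm_inner_apply_sum_le (hu1 : star u * u = 1) {ζ : H} (hζ : ∀ i, p i ζ = 0)
    (s : Finset ℕ) (β : H) : ‖⟪ζ, u (∑ i ∈ s, p i β)⟫_ℂ‖ ≤ C * (‖ζ‖ * ‖β‖) := by
  set T := componentProj p s β
  have hu (v : H) : ‖u v‖ = ‖v‖ := u.norm_map_iff_adjoint_comp_self.2 hu1 v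
  have hy : ‖u * T‖ ≤ 1 := ContinuousLinearMap.opNorm_le_bound _ zero_le_one fun v => by
    rw [mul_apply_eq_comp, hu, one_mul]
    exact (T.le_opNorm v).trans <|
      mul_le_of_le_one_left (norm_nonneg v) (hp.norm_componentProj_le s β)
  have hD : ⟪ζ, (u * pinch p (star u * (u * T)) - pinch p (u * T)) β⟫_ℂ =
      ⟪ζ, u (∑ i ∈ s, p i β)⟫_ℂ := by
    rw [← mul_assoc, hu1, sub_apply, hp.pinch_mul_componentProj_apply, mul_apply_eq_comp,
      hp.pinch_mul_componentProj_apply, inner_sub_right, inner_sum]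
    simp [hp.inner_apply_eq_zero hζ, hp.apply_apply_self, inner_sum]
  rw [← hD]
  refine (norm_inner_le_norm _ _).trans ?_
  rw [mul_left_comm]
  gcongr
  exact (ContinuousLinearMap.le_opNorm _ _).trans <| by
    gcongr; exact hbound _ ((isCompactOperator_componentProj s β).clm_comp u) hy

theorem norm_inner_apply_le (hu1 : star u * u = 1) {ζ : H} (hζ : ∀ i, p i ζ = 0) {β : H}
    (hβ : HasSum (fun i => p i β) β) : ‖⟪ζ, u β⟫_ℂ‖ ≤ C * (‖ζ‖ * ‖β‖) :=
  le_of_tendsto' ((hβ.mapL u).mapL (innerSL ℂ ζ)).norm fun s => by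
    simpa [map_sum] using hp.norm_inner_apply_sum_le hbound hu1 hζ s β

theorem norm_conj_complement_apply_sub_le (hC : 0 ≤ C) (hu1 : star u * u = 1)
    (hu2 : u * star u = 1) {p0 : H →L[ℂ] H} (hp0 : IsStarProjection p0)
    (hsub : ∀ ξ, HasSum (fun i => p i ξ) (ξ - p0 ξ)) {ζ : H} (hζ : ∀ i, p i ζ = 0) :
    ‖u (p0 (star u ζ)) - ζ‖ ≤ C * ‖ζ‖ := by
  set w := star u ζ
  set β := w - p0 w
  have hp0β : p0 β = 0 := by
    rw [map_sub, hp0.isIdempotentElem.apply_apply, sub_self]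
  have hβ : HasSum (fun i => p i β) β := by simpa [hp0β] using hsub β
  have hnorm : ‖u (p0 w) - ζ‖ = ‖β‖ := by
    rw [show ζ = u w by rw [← mul_apply_eq_comp, hu2, one_apply_eq_self], ← map_sub,
      u.norm_map_iff_adjoint_comp_self.2 hu1, norm_sub_rev]
  have hβw : ⟪β, β⟫_ℂ = ⟪u β, ζ⟫_ℂ :=
    calc ⟪β, β⟫_ℂ = ⟪β, w⟫_ℂ - ⟪p0 β, w⟫_ℂ := by
          rw [inner_sub_right, hp0.isSelfAdjoint.inner_apply_left]
      _ = ⟪u β, ζ⟫_ℂ := by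
          rw [hp0β, inner_zero_left, sub_zero]
          exact u.adjoint_inner_right β ζ
  have hsq : ‖β‖ ^ 2 ≤ C * (‖ζ‖ * ‖β‖) := by
    have : ‖β‖ ^ 2 = ‖⟪β, β⟫_ℂ‖ := by simp [inner_self_eq_norm_sq_to_K]
    rw [this, hβw, norm_inner_symm]
    exact hp.norm_inner_apply_le hbound hu1 hζ hβ
  rw [hnorm]
  rcases (norm_nonneg β).eq_or_lt with hβ0 | hβ0
  · rw [← hβ0]; positivity
  · exact le_of_mul_le_mul_right (by nlinarith) hβ0

end IsOrthogonalProjectionFamily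

section Complement

variable {H : Type*} [NormedAddCommGroup H] [InnerProductSpace ℂ H]
  {p : ℕ → H →L[ℂ] H} {p0 : H →L[ℂ] H}

theorem apply_apply_complement (hp0 : IsIdempotentElem p0)
    (hp0fix : ∀ ξ : H, p0 ξ = ξ ↔ ∀ i, p i ξ = 0) (i : ℕ) (ξ : H) : p i (p0 ξ) = 0 :=
  (hp0fix (p0 ξ)).1 (hp0.apply_apply ξ) i

variable [CompleteSpace H] (hp : IsOrthogonalProjectionFamily p) (hp0 : IsStarProjection p0)
  (hp0fix : ∀ ξ : H, p0 ξ = ξ ↔ ∀ i, p i ξ = 0)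
include hp hp0 hp0fix

theorem isOrthogonalProjectionFamily_extFam : IsOrthogonalProjectionFamily (extFam p0 p) := by
  have hpp0 (i : ℕ) : p i * p0 = 0 :=
    ContinuousLinearMap.ext (apply_apply_complement hp0.isIdempotentElem hp0fix i)
  have hp0p (i : ℕ) : p0 * p i = 0 := by
    simpa [(hp.isStarProjection i).isSelfAdjoint.star_eq, hp0.isSelfAdjoint.star_eq] using
      congrArg star (hpp0 i)
  refine ⟨fun i => ?_, ?_⟩
  · cases i
    exacts [hp0, hp.isStarProjection _]
  · rintro (_ | i) (_ | j) hij
    exacts [absurd rfl hij, hp0p j, hpp0 i, hp.mul_eq_zero fun h => hij (congrArg (· + 1) h)]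

theorem IsOrthogonalProjectionFamily.hasSum_extFam_apply (ξ : H) :
    HasSum (fun i => extFam p0 p i ξ) ξ :=
  (isOrthogonalProjectionFamily_extFam hp hp0 hp0fix).hasSum_apply_of_forall_apply_eq_zero
    (fun η hη => by rw [← (hp0fix η).2 fun i => hη (i + 1)]; exact hη 0) ξ

theorem IsOrthogonalProjectionFamily.hasSum_apply_sub (ξ : H) :
    HasSum (fun i => p i ξ) (ξ - p0 ξ) := by
  simpa [extFam] using (hasSum_nat_add_iff' 1).2 (hp.hasSum_extFam_apply hp0 hp0fix ξ)

theorem IsOrthogonalProjectionFamily.norm_sub_one_le_of_hasSum {u : H →L[ℂ] H}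
    (hu1 : star u * u = 1) (hu2 : u * star u = 1) {C : ℝ} (hC : 0 ≤ C)
    (hbound : ∀ y : H →L[ℂ] H, IsCompactOperator ⇑y → ‖y‖ ≤ 1 →
      ‖u * pinch p (star u * y) - pinch p y‖ ≤ C)
    {s : H →L[ℂ] H}
    (hs : ∀ ξ, HasSum (fun i => (u * extFam p0 p i * star u) (extFam p0 p i ξ)) (s ξ)) :
    ‖s - 1‖ ≤ 2 * C := by
  refine ContinuousLinearMap.opNorm_le_bound _ (by positivity) fun ξ => ?_
  set f0 := u (p0 (star u (p0 ξ))) - p0 ξ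
  have hdiff := (hasSum_nat_add_iff' 1).2 ((hs ξ).sub (hp.hasSum_extFam_apply hp0 hp0fix ξ))
  simp only [Finset.sum_range_one, extFam, mul_apply_eq_comp] at hdiff
  have hmain : ‖s ξ - ξ - f0‖ ≤ C * ‖ξ‖ :=
    le_of_tendsto' hdiff.norm fun t => hp.norm_sum_conj_apply_sub_le hbound t ξ
  have hcompl : ‖f0‖ ≤ C * ‖ξ‖ :=
    (hp.norm_conj_complement_apply_sub_le hbound hC hu1 hu2 hp0 (hp.hasSum_apply_sub hp0 hp0fix)
      (apply_apply_complement hp0.isIdempotentElem hp0fix · ξ)).trans <| by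
        gcongr
        exact (p0.le_opNorm ξ).trans (mul_le_of_le_one_left (norm_nonneg ξ) (hp0.norm_le _))
  calc ‖(s - 1) ξ‖ = ‖(s ξ - ξ - f0) + f0‖ := by simp
    _ ≤ 2 * C * ‖ξ‖ := (norm_add_le _ _).trans (by linarith)

end Complement

theorem pinching_section_operator_general
    {H : Type*} [NormedAddCommGroup H] [InnerProductSpace ℂ H] [CompleteSpace H]
    (p : ℕ → H →L[ℂ] H)
    (hsa : ∀ i, IsSelfAdjoint (p i))
    (hidem : ∀ i, p i * p i = p i)
    (horth : ∀ i j, i ≠ j → p i * p j = 0)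
    (p0 : H →L[ℂ] H) (hp0sa : IsSelfAdjoint p0) (hp0idem : p0 * p0 = p0)
    (hp0fix : ∀ ξ : H, p0 ξ = ξ ↔ ∀ i, p i ξ = 0)
    (u : H →L[ℂ] H) (hu1 : star u * u = 1) (hu2 : u * star u = 1)
    (hucpt : IsCompactOperator ⇑(u - 1))
    (C : ℝ) (hC : 0 ≤ C)
    (hbound : ∀ y : H →L[ℂ] H, IsCompactOperator ⇑y → ‖y‖ ≤ 1 →
      ‖u * pinch p (star u * y) - pinch p y‖ ≤ C) :
    ∃ s : H →L[ℂ] H,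
      (∀ ξ : H, HasSum (fun i => (u * extFam p0 p i * star u) ((extFam p0 p i) ξ)) (s ξ)) ∧
      IsCompactOperator ⇑(s - 1) ∧
      (∀ i, s * extFam p0 p i = (u * extFam p0 p i * star u) * s) ∧
      ‖s - 1‖ ≤ 3 * C := by
  have hp : IsOrthogonalProjectionFamily p := ⟨fun i => ⟨hidem i, hsa i⟩, horth⟩
  have hp0 : IsStarProjection p0 := ⟨hp0idem, hp0sa⟩
  have hP := isOrthogonalProjectionFamily_extFam hp hp0 hp0fix
  have hsum := hP.summable_mul_mul_of_isCompactOperator (isCompactOperator_star_sub_one hu1 hucpt)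
  have hs := hasSum_sectionOp_apply hP (hp.hasSum_extFam_apply hp0 hp0fix) hsum
  refine ⟨sectionOp (extFam p0 p) u, hs, hP.isCompactOperator_sectionOp_sub_one hu1 hucpt,
    hP.sectionOp_mul hu1 hsum, ?_⟩
  calc ‖sectionOp (extFam p0 p) u - 1‖ ≤ 2 * C :=
        hp.norm_sub_one_le_of_hasSum hp0 hp0fix hu1 hu2 hC hbound hs
    _ ≤ 3 * C := by linarith

/-- Let `u` be a unitary with `u - 1` compact and set `q_i := u p_i u*`
(including `q₀ = u p₀ u*`). Then the series `∑_{i ≥ 0} q_i p_i ξ` converges for every `ξ`,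
defining a bounded operator `s`; `s - 1` is compact; `s p_i = q_i s` for every `i ≥ 0`; and if
`C ≥ 0` bounds `‖u * P (u* y) - P y‖` over compact `y` with `‖y‖ ≤ 1`, then `‖s - 1‖ ≤ 3C`. -/
theorem pinching_section_operator
    {H : Type*} [NormedAddCommGroup H] [InnerProductSpace ℂ H] [CompleteSpace H]
    [TopologicalSpace.SeparableSpace H]
    (hinf : ¬ FiniteDimensional ℂ H)
    (p : ℕ → H →L[ℂ] H)
    (hsa : ∀ i, IsSelfAdjoint (p i))
    (hidem : ∀ i, p i * p i = p i)
    (horth : ∀ i j, i ≠ j → p i * p j = 0)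
    (p0 : H →L[ℂ] H) (hp0sa : IsSelfAdjoint p0) (hp0idem : p0 * p0 = p0)
    (hp0fix : ∀ ξ : H, p0 ξ = ξ ↔ ∀ i, p i ξ = 0)
    (u : H →L[ℂ] H) (hu1 : star u * u = 1) (hu2 : u * star u = 1)
    (hucpt : IsCompactOperator ⇑(u - 1))
    (C : ℝ) (hC : 0 ≤ C)
    (hbound : ∀ y : H →L[ℂ] H, IsCompactOperator ⇑y → ‖y‖ ≤ 1 →
      ‖u * pinch p (star u * y) - pinch p y‖ ≤ C) :
    ∃ s : H →L[ℂ] H,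
      (∀ ξ : H, HasSum (fun i => (u * extFam p0 p i * star u) ((extFam p0 p i) ξ)) (s ξ)) ∧
      IsCompactOperator ⇑(s - 1) ∧
      (∀ i, s * extFam p0 p i = (u * extFam p0 p i * star u) * s) ∧
      ‖s - 1‖ ≤ 3 * C :=
  pinching_section_operator_general p hsa hidem horth p0 hp0sa hp0idem hp0fix u hu1 hu2 hucpt C hC
    hbound
end
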